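/- arXiv:1701.02852 — 9 statements merged into one kernel-verified Lean document; each statement's English description precedes it below -/
import Mathlib

section
/- Let f(x) = min_{i∈I} f_i(x) with I finite, where each f_i : X → ℝ is Hadamard directionally differentiable at x̄ with sublinear directional derivative. Then the Fréchet subdifferential of f at x̄ is the intersection of the Fréchet subdifferentials of the active functions: ∂f(x̄) = ⋂_{i∈I(x̄)} ∂f_i(x̄). -/
open Filter Topology Set Metric
open scoped RealInnerProductSpace

noncomputable section

/-- `n`-dimensional Euclidean space. -/
abbrev En (n : ℕ) := EuclideanSpace ℝ (Fin n)

/-- `d` is the Hadamard directional derivative map of `f` at `x`: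
for each direction `p`, `(f (x + t • p') - f x)/t → d p` as `t ↓ 0`, `p' → p`. -/
def HadamardDD {n : ℕ} (f : En n → ℝ) (x : En n) (d : En n → ℝ) : Prop :=
  ∀ p : En n,
    Tendsto (fun q : ℝ × En n => (f (x + q.1 • q.2) - f x) / q.1)
      ((𝓝[>] (0 : ℝ)) ×ˢ 𝓝 p) (𝓝 (d p))

/-- The Fréchet subdifferential of `f` at `x`. -/
def FSubdiff {n : ℕ} (f : En n → ℝ) (x : En n) : Set (En n) :=
  {v | ∀ ε > (0 : ℝ), ∀ᶠ y in 𝓝 x, f y - f x - ⟪v, y - x⟫ ≥ -ε * ‖y - x‖}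

/-- The outer (Painlevé–Kuratowski) limit of Fréchet subdifferentials of `f`
along sequences `x_k → xb` with `f x_k > f xb`. -/
def OuterLim {n : ℕ} (f : En n → ℝ) (xb : En n) : Set (En n) :=
  {y | ∃ xk yk : ℕ → En n, Tendsto xk atTop (𝓝 xb) ∧ (∀ k, f xb < f (xk k)) ∧
    (∀ k, yk k ∈ FSubdiff f (xk k)) ∧ Tendsto yk atTop (𝓝 y)}

/-- Hadamard directional differentiability implies continuity at the point,
in the quantitative form we need. -/
lemma hadamard_abs_lt {n : ℕ} {f : En n → ℝ} {x : En n} {d : En n → ℝ}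
    (h : HadamardDD f x d) {δ : ℝ} (hδ : 0 < δ) : ∀ᶠ y in 𝓝 x, |f y - f x| < δ := by
  by_contra hc
  rw [Filter.not_eventually] at hc
  have hsel : ∀ k : ℕ, ∃ y, y ∈ Metric.ball x (1 / (k + 1)) ∧ δ ≤ |f y - f x| := by
    intro k
    have hb : Metric.ball x (1 / (k + 1)) ∈ 𝓝 x := Metric.ball_mem_nhds _ (by positivity)
    obtain ⟨y, hy, hy2⟩ := Filter.frequently_iff.mp hc hb
    exact ⟨y, hy, not_lt.mp hy2⟩
  choose y hyb hyd using hsel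
  have hyx : ∀ k, y k ≠ x := by
    intro k hk
    have := hyd k
    rw [hk] at this
    simp at this
    linarith
  have hylim : Tendsto y atTop (𝓝 x) := by
    rw [tendsto_iff_dist_tendsto_zero]
    refine squeeze_zero (fun k => dist_nonneg) (fun k => le_of_lt ?_)
      tendsto_one_div_add_atTop_nhds_zero_nat
    simpa [Metric.mem_ball] using hyb k
  set t : ℕ → ℝ := fun k => ‖y k - x‖ with ht
  have htpos : ∀ k, 0 < t k := fun k => norm_pos_iff.mpr (sub_ne_zero.mpr (hyx k))
  set p : ℕ → En n := fun k => (t k)⁻¹ • (y k - x) with hp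
  have hps : ∀ k, p k ∈ Metric.sphere (0 : En n) 1 := by
    intro k
    simp only [hp, Metric.mem_sphere, dist_zero_right, norm_smul, norm_inv,
      Real.norm_eq_abs, abs_of_pos (htpos k)]
    exact inv_mul_cancel₀ (htpos k).ne'
  obtain ⟨q, hq, φ, hφ, hpq⟩ := (isCompact_sphere (0 : En n) 1).tendsto_subseq hps
  have htlim : Tendsto t atTop (𝓝[>] 0) := by
    refine tendsto_nhdsWithin_of_tendsto_nhds_of_eventually_within _ ?_
      (Eventually.of_forall htpos)
    have := tendsto_iff_norm_sub_tendsto_zero.mp hylim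
    exact this
  have hprod : Tendsto (fun k => (t (φ k), p (φ k))) atTop ((𝓝[>] (0 : ℝ)) ×ˢ 𝓝 q) :=
    ((htlim.comp hφ.tendsto_atTop)).prodMk (hpq)
  have hquot := (h q).comp hprod
  have hmul : Tendsto
      (fun k => t (φ k) * ((f (x + t (φ k) • p (φ k)) - f x) / t (φ k)))
      atTop (𝓝 (0 * d q)) :=
    ((htlim.comp hφ.tendsto_atTop).mono_right nhdsWithin_le_nhds).mul hquot
  have heq : ∀ k, t (φ k) * ((f (x + t (φ k) • p (φ k)) - f x) / t (φ k))
      = f (y (φ k)) - f x := by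
    intro k
    have h1 : x + t (φ k) • p (φ k) = y (φ k) := by
      rw [hp]
      rw [smul_inv_smul₀ (htpos (φ k)).ne']
      abel
    rw [h1, mul_div_cancel₀ _ (htpos (φ k)).ne']
  rw [zero_mul] at hmul
  have hfin : Tendsto (fun k => f (y (φ k)) - f x) atTop (𝓝 0) := by
    simpa only [funext heq] using hmul
  have habs := hfin.abs
  rw [abs_zero] at habs
  obtain ⟨k, hk⟩ := (habs.eventually_lt_const hδ).exists
  exact absurd (hyd (φ k)) (not_le.mpr hk)

/-- the Fréchet subdifferential of a finite pointwise minimum of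
Hadamard directionally differentiable functions with sublinear derivatives is the
intersection of the subdifferentials of the active functions. -/
theorem fsubdiff_min_eq_iInter {n : ℕ} {ι : Type*} [Fintype ι]
    (X : Set (En n)) (hX : IsOpen X)
    (fi : ι → En n → ℝ) (f : En n → ℝ)
    (hf : ∀ x : En n, IsLeast (Set.range fun i => fi i x) (f x))
    (xb : En n) (hxb : xb ∈ X)
    (di : ι → En n → ℝ) (hdd : ∀ i, HadamardDD (fi i) xb (di i))
    (hconv : ∀ i, ConvexOn ℝ Set.univ (di i))
    (hpos : ∀ i (p : En n) (c : ℝ), 0 < c → di i (c • p) = c * di i p) :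
    FSubdiff f xb = ⋂ i ∈ {i : ι | fi i xb = f xb}, FSubdiff (fi i) xb := by
  have hle : ∀ (x : En n) i, f x ≤ fi i x := fun x i => (hf x).2 ⟨i, rfl⟩
  ext v
  simp only [Set.mem_iInter, Set.mem_setOf_eq]
  constructor
  · -- ⊆ : f ≤ fi i and fi i xb = f xb for active i
    intro hv i hi ε hε
    filter_upwards [hv ε hε] with y hy
    have h1 := hle y i
    show fi i y - fi i xb - ⟪v, y - xb⟫ ≥ -ε * ‖y - xb‖
    rw [hi]
    have : f y - f xb - ⟪v, y - xb⟫ ≥ -ε * ‖y - xb‖ := hy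
    linarith
  · -- ⊇
    intro hv ε hε
    have key : ∀ i, ∀ᶠ y in 𝓝 xb, fi i y - f xb - ⟪v, y - xb⟫ ≥ -ε * ‖y - xb‖ := by
      intro i
      by_cases hi : fi i xb = f xb
      · filter_upwards [hv i hi ε hε] with y hy
        have : fi i y - fi i xb - ⟪v, y - xb⟫ ≥ -ε * ‖y - xb‖ := hy
        rw [hi] at this
        exact this
      · have hlt : f xb < fi i xb := lt_of_le_of_ne (hle xb i) (Ne.symm hi)
        set δ := fi i xb - f xb with hδdef
        have hδ : 0 < δ := by simp only [hδdef]; linarith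
        have h1 : ∀ᶠ y in 𝓝 xb, |fi i y - fi i xb| < δ / 2 :=
          hadamard_abs_lt (hdd i) (by linarith)
        have h2 : Tendsto (fun y : En n => ⟪v, y - xb⟫ - ε * ‖y - xb‖) (𝓝 xb) (𝓝 0) := by
          have hc : Continuous fun y : En n => ⟪v, y - xb⟫ - ε * ‖y - xb‖ :=
            (continuous_const.inner (continuous_id.sub continuous_const)).sub
              (continuous_const.mul (continuous_id.sub continuous_const).norm)
          have := hc.tendsto xb
          simpa using this
        have h3 : ∀ᶠ y in 𝓝 xb, ⟪v, y - xb⟫ - ε * ‖y - xb‖ < δ / 2 :=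
          h2.eventually_lt_const (by linarith)
        filter_upwards [h1, h3] with y hy1 hy3
        have h4 := (abs_lt.mp hy1).1
        show fi i y - f xb - ⟪v, y - xb⟫ ≥ -ε * ‖y - xb‖
        have : f xb = fi i xb - δ := by simp [hδdef]
        rw [this]
        linarith
    have hall : ∀ᶠ y in 𝓝 xb, ∀ i, fi i y - f xb - ⟪v, y - xb⟫ ≥ -ε * ‖y - xb‖ :=
      eventually_all.mpr key
    filter_upwards [hall] with y hy
    obtain ⟨j, hj⟩ := (hf y).1
    have := hy j
    show f y - f xb - ⟪v, y - xb⟫ ≥ -ε * ‖y - xb‖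
    rw [← hj]
    exact this
end
end

section
/- Let f = min_{i∈I} f_i on open X ⊆ ℝⁿ, each f_i Hadamard directionally differentiable at x̄ with sublinear directional derivative, I finite. Then for every p on the unit sphere there exists ε = ε(x̄,p) > 0 such that for all x of the form x = x̄ + t p + t ε u with t ∈ (0,ε] and u in the closed unit ball, the active set satisfies I(x) ⊆ I(x̄,p), where I(x̄,p) = { i₀ ∈ I(x̄) : max_{v∈∂f_{i₀}(x̄)}⟨v,p⟩ = min_{i∈I(x̄)} max_{v∈∂f_i(x̄)}⟨v,p⟩ }. -/
open Filter Topology Set Metric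
open scoped RealInnerProductSpace

noncomputable section

/-- for every unit direction `p` there is `ε > 0` such that the active
index set at every point `xb + t • p + (t*ε) • u` (with `t ∈ (0,ε]`, `‖u‖ ≤ 1`)
is contained in `I(xb, p)`, the set of active indices minimising the directional
derivative in direction `p`. -/
theorem active_set_cone_inclusion {n : ℕ} {ι : Type*} [Fintype ι]
    (X : Set (En n)) (hX : IsOpen X)
    (fi : ι → En n → ℝ) (f : En n → ℝ)
    (hf : ∀ x : En n, IsLeast (Set.range fun i => fi i x) (f x))
    (xb : En n) (hxb : xb ∈ X)
    (hcont : ∀ i, Continuous (fi i))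
    (di : ι → En n → ℝ) (hdd : ∀ i, HadamardDD (fi i) xb (di i))
    (hconv : ∀ i, ConvexOn ℝ Set.univ (di i))
    (hpos : ∀ i (p : En n) (c : ℝ), 0 < c → di i (c • p) = c * di i p) :
    ∀ p : En n, ‖p‖ = 1 → ∃ ε > (0 : ℝ), ∀ t ∈ Set.Ioc (0 : ℝ) ε, ∀ u : En n, ‖u‖ ≤ 1 →
      ∀ i : ι, fi i (xb + t • p + (t * ε) • u) = f (xb + t • p + (t * ε) • u) →
        (fi i xb = f xb ∧ ∀ i' : ι, fi i' xb = f xb → di i p ≤ di i' p) := by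
  classical
  intro p hp
  have hle : ∀ x i, f x ≤ fi i x := fun x i => (hf x).2 ⟨i, rfl⟩
  obtain ⟨i0, hi0⟩ := (hf xb).1
  set A : Finset ι := Finset.univ.filter (fun i => fi i xb = f xb) with hAdef
  have hAne : A.Nonempty := ⟨i0, by simp [hAdef, hi0]⟩
  set m : ℝ := A.inf' hAne (fun i => di i p) with hmdef
  obtain ⟨j0, hj0A, hj0⟩ := A.exists_mem_eq_inf' hAne (fun i => di i p)
  have hj0eq : fi j0 xb = f xb := by simpa [hAdef] using hj0A
  -- inactive indices
  set C : Finset ι := Finset.univ.filter (fun i => fi i xb ≠ f xb) with hCdef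
  have hCev : ∀ᶠ y in 𝓝 xb, ∀ i ∈ C, fi j0 y < fi i y := by
    rw [Filter.eventually_all_finset]
    intro i hiC
    have hne : fi i xb ≠ f xb := by simpa [hCdef] using hiC
    have hgt : fi j0 xb < fi i xb := by
      have := lt_of_le_of_ne (hle xb i) (Ne.symm hne)
      rw [hj0eq]; exact this
    have hct : ContinuousAt (fun y => fi i y - fi j0 y) xb :=
      ((hcont i).sub (hcont j0)).continuousAt
    have hev := hct.tendsto.eventually
      (eventually_gt_nhds (by linarith : (0:ℝ) < fi i xb - fi j0 xb))
    filter_upwards [hev] with y hy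
    simpa using sub_pos.mp hy
  -- active non-minimizing indices
  set B : Finset ι := A.filter (fun i => m < di i p) with hBdef
  have hBev : ∀ᶠ q in (𝓝[>] (0:ℝ)) ×ˢ 𝓝 p,
      ∀ i ∈ B, fi j0 (xb + q.1 • q.2) < fi i (xb + q.1 • q.2) := by
    rw [Filter.eventually_all_finset]
    intro i hiB
    have hiA : fi i xb = f xb := by
      have := (Finset.mem_filter.mp hiB).1
      simpa [hAdef] using this
    have him : m < di i p := (Finset.mem_filter.mp hiB).2
    have h1 := (hdd i p).eventually
      (eventually_gt_nhds (show (m + di i p)/2 < di i p by linarith))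
    have h2 := (hdd j0 p).eventually
      (eventually_lt_nhds (show di j0 p < (m + di i p)/2 by rw [← hj0]; linarith))
    have h3 : ∀ᶠ q in (𝓝[>] (0:ℝ)) ×ˢ 𝓝 p, q.1 ∈ Set.Ioi (0:ℝ) :=
      Filter.Eventually.prod_inl (eventually_mem_nhdsWithin) _
    filter_upwards [h1, h2, h3] with q hq1 hq2 hq3
    have ht : (0:ℝ) < q.1 := hq3
    have h4 : (fi j0 (xb + q.1 • q.2) - fi j0 xb) / q.1
        < (fi i (xb + q.1 • q.2) - fi i xb) / q.1 := hq2.trans hq1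
    have h5 := (div_lt_div_iff_of_pos_right ht).mp h4
    have : fi j0 xb = fi i xb := by rw [hj0eq, hiA]
    linarith
  rw [Filter.eventually_prod_iff] at hBev
  obtain ⟨Pa, hPa, Pb, hPb, hImp⟩ := hBev
  obtain ⟨a, ha, haSub⟩ := mem_nhdsGT_iff_exists_Ioc_subset.mp hPa
  obtain ⟨δ, hδ, hδImp⟩ := Metric.eventually_nhds_iff.mp hPb
  obtain ⟨r, hr, hrImp⟩ := Metric.eventually_nhds_iff.mp hCev
  have ha' : (0:ℝ) < a := ha
  refine ⟨min (min a (δ/2)) (min (r/3) 1), by positivity, ?_⟩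
  set ε := min (min a (δ/2)) (min (r/3) 1) with hεdef
  have hεpos : 0 < ε := by positivity
  have hεa : ε ≤ a := (min_le_left _ _).trans (min_le_left _ _)
  have hεδ : ε ≤ δ/2 := (min_le_left _ _).trans (min_le_right _ _)
  have hεr : ε ≤ r/3 := (min_le_right _ _).trans (min_le_left _ _)
  have hε1 : ε ≤ 1 := (min_le_right _ _).trans (min_le_right _ _)
  intro t ht u hu i hieq
  obtain ⟨htpos, htle⟩ := ht
  set x : En n := xb + t • p + (t * ε) • u with hxdef
  set p' : En n := p + ε • u with hp'def
  have hx : x = xb + t • p' := by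
    rw [hxdef, hp'def, smul_add, smul_smul, add_assoc]
  -- inactive exclusion
  have hdistx : dist x xb < r := by
    rw [dist_eq_norm]
    have hxsub : x - xb = t • p + (t * ε) • u := by
      rw [hxdef]; abel
    rw [hxsub]
    have h1 : ‖t • p + (t * ε) • u‖ ≤ ‖t • p‖ + ‖(t * ε) • u‖ := norm_add_le _ _
    have h2 : ‖t • p‖ = |t| * ‖p‖ := by rw [norm_smul, Real.norm_eq_abs]
    have h3 : ‖(t * ε) • u‖ = |t * ε| * ‖u‖ := by rw [norm_smul, Real.norm_eq_abs]
    have habs : |t| = t := abs_of_pos htpos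
    have habs2 : |t * ε| = t * ε := abs_of_pos (by positivity)
    have hεle : t * ε ≤ ε := by nlinarith
    have : ‖(t * ε) • u‖ ≤ ε := by
      rw [h3, habs2]
      calc t * ε * ‖u‖ ≤ t * ε * 1 := by
            apply mul_le_mul_of_nonneg_left hu (by positivity)
        _ = t * ε := mul_one _
        _ ≤ ε := hεle
    have : ‖t • p + (t * ε) • u‖ ≤ ε + ε := by
      rw [h2] at h1
      rw [habs, hp, mul_one] at h1
      linarith
    linarith
  have hClt : ∀ j ∈ C, fi j0 x < fi j x := hrImp hdistx
  -- cone exclusion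
  have hPat : Pa t := haSub ⟨htpos, htle.trans hεa⟩
  have hPbp' : Pb p' := by
    apply hδImp
    rw [hp'def, dist_eq_norm, add_sub_cancel_left, norm_smul, Real.norm_eq_abs,
      abs_of_pos hεpos]
    calc ε * ‖u‖ ≤ ε * 1 := mul_le_mul_of_nonneg_left hu hεpos.le
      _ = ε := mul_one _
      _ < δ := by linarith
  have hBlt : ∀ j ∈ B, fi j0 x < fi j x := by
    intro j hj
    have := hImp hPat hPbp' j hj
    rwa [← hx] at this
  -- conclusions
  have hfle : f x ≤ fi j0 x := hle x j0
  have hiact : fi i xb = f xb := by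
    by_contra hne
    have hiC : i ∈ C := by simp [hCdef, hne]
    have := hClt i hiC
    rw [hieq] at this
    linarith
  refine ⟨hiact, ?_⟩
  intro i' hi'
  have hiA : i ∈ A := by simp [hAdef, hiact]
  have hi'A : i' ∈ A := by simp [hAdef, hi']
  have hilem : di i p ≤ m := by
    by_contra hlt
    push_neg at hlt
    have hiB : i ∈ B := Finset.mem_filter.mpr ⟨hiA, hlt⟩
    have := hBlt i hiB
    rw [hieq] at this
    linarith
  exact hilem.trans (Finset.inf'_le _ hi'A)
end
end

section
/- Let f = min_{i∈I} f_i on open X ⊆ ℝⁿ with I finite and each f_i Hadamard directionally differentiable at x̄ with sublinear derivative. Then for every unit vector p and every y ∈ ⋂_{i∈I(x̄,p)} Argmax_{v∈∂f_i(x̄)} ⟨v,p⟩, there exist sequences x_k → x̄ with (x_k − x̄)/‖x_k − x̄‖ → p, and y_k → y with y_k ∈ ∂f(x_k) (Fréchet subdifferential) for all k. -/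
open Filter Topology Set Metric
open scoped RealInnerProductSpace

noncomputable section

/-!
Only indices of `I(x̄, p)` can realise the minimum `f` on a thin cone around the ray
`x̄ + t p`: inactive ones by continuity, the other active ones because their Hadamard
derivative along `p` is larger. Since `y` is a Fréchet subgradient of each of them at `x̄`,
on the ball `B(x̄ + t p, ρ t)` the function `f - ⟪y, ·⟫` is at least its value at `x̄`
minus `o(t)`, while at the centre it exceeds that value by at most `o(t)` because
`⟪y, p⟫ = f_{i₀}'(x̄; p)`. Minimising `f - ⟪y, ·⟫ + K ‖· - (x̄ + t p)‖²` over the ball, with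
`K ρ² t² ≈ o(t)`, gives a minimiser `x_t` within `ρ t / 2` of the centre, at which
`y - 2K (x_t - x̄ - t p)` is a Fréchet subgradient of `f` at distance `o(1)` from `y`.
-/

section Ray

variable {E : Type*} [NormedAddCommGroup E] [NormedSpace ℝ E]

theorem tendsto_add_smul_nhdsGT_prod (xb p : E) :
    Tendsto (fun q : ℝ × E => xb + q.1 • q.2) (𝓝[>] (0 : ℝ) ×ˢ 𝓝 p) (𝓝 xb) := by
  have hcont : Continuous fun q : ℝ × E => xb + q.1 • q.2 := by fun_prop
  simpa using (hcont.tendsto ((0 : ℝ), p)).mono_left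
    (by rw [nhds_prod_eq]; exact prod_mono nhdsWithin_le_nhds le_rfl)

theorem eventually_forall_closedBall_ray_of_eventually_nhds {P : E → Prop} {xb : E}
    (h : ∀ᶠ x in 𝓝 xb, P x) (p : E) (ρ : ℝ) :
    ∀ᶠ t in 𝓝[>] (0 : ℝ), ∀ x ∈ closedBall (xb + t • p) (ρ * t), P x := by
  obtain ⟨δ, hδ, hball⟩ := Metric.eventually_nhds_iff_ball.mp h
  have hlim : Tendsto (fun t : ℝ => ‖t • p‖ + ρ * t) (𝓝[>] 0) (𝓝 0) :=
    ((by fun_prop : Continuous fun t : ℝ => ‖t • p‖ + ρ * t).tendsto' 0 0 (by simp)).mono_left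
      nhdsWithin_le_nhds
  filter_upwards [hlim.eventually (gt_mem_nhds hδ)] with t ht x hx
  refine hball x (mem_ball.2 ?_)
  calc dist x xb ≤ dist x (xb + t • p) + dist (xb + t • p) xb := dist_triangle _ _ _
    _ ≤ ρ * t + ‖t • p‖ := add_le_add (mem_closedBall.1 hx)
      (by rw [dist_eq_norm, add_sub_cancel_left])
    _ < δ := by linarith

theorem exists_forall_closedBall_ray_of_eventually_prod {P : E → Prop} {xb p : E}
    (h : ∀ᶠ q in 𝓝[>] (0 : ℝ) ×ˢ 𝓝 p, P (xb + q.1 • q.2)) :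
    ∃ ρ > 0, ∀ᶠ t in 𝓝[>] (0 : ℝ), ∀ x ∈ closedBall (xb + t • p) (ρ * t), P x := by
  obtain ⟨T, hT, Q, hQ, hTQ⟩ := eventually_prod_iff.mp h
  obtain ⟨ρ, hρ, hball⟩ := Metric.eventually_nhds_iff_ball.mp hQ
  refine ⟨ρ / 2, half_pos hρ, ?_⟩
  filter_upwards [hT, self_mem_nhdsWithin] with t hTt (ht : 0 < t) x hx
  have hq : t⁻¹ • (x - xb) - p = t⁻¹ • (x - (xb + t • p)) := by
    rw [← sub_sub, smul_sub t⁻¹ (x - xb), smul_smul, inv_mul_cancel₀ ht.ne', one_smul]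
  have hdist : dist (t⁻¹ • (x - xb)) p < ρ := by
    rw [dist_eq_norm, hq, norm_smul, Real.norm_eq_abs, abs_inv, abs_of_pos ht, ← dist_eq_norm,
      inv_mul_lt_iff₀ ht]
    nlinarith [mem_closedBall.1 hx, mul_pos ht hρ]
  simpa [smul_smul, mul_inv_cancel₀ ht.ne'] using hTQ hTt (hball _ hdist)

theorem norm_inv_norm_smul_sub_le {p : E} (hp : ‖p‖ = 1) {t : ℝ} (ht : 0 < t) (u : E) :
    ‖‖u‖⁻¹ • u - p‖ ≤ 2 * ‖u - t • p‖ / t := by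
  have htp : ‖t • p‖ = t := by rw [norm_smul, hp, Real.norm_of_nonneg ht.le, mul_one]
  rcases eq_or_ne u 0 with rfl | hu
  · rw [zero_sub, norm_zero, inv_zero, zero_smul, zero_sub, norm_neg, norm_neg, htp, hp,
      mul_div_cancel_right₀ _ ht.ne']
    norm_num
  have hu' : 0 < ‖u‖ := norm_pos_iff.2 hu
  have hsplit : ‖u‖⁻¹ • u - p = (‖u‖⁻¹ - t⁻¹) • u + t⁻¹ • (u - t • p) := by
    rw [smul_sub, smul_smul, inv_mul_cancel₀ ht.ne', one_smul, sub_smul]; abel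
  have hfirst : ‖(‖u‖⁻¹ - t⁻¹) • u‖ = |t - ‖u‖| / t := by
    rw [norm_smul, Real.norm_eq_abs, show ‖u‖⁻¹ - t⁻¹ = (t - ‖u‖) / (t * ‖u‖) by field_simp,
      abs_div, abs_of_pos (mul_pos ht hu')]
    field_simp
  have hgap : |t - ‖u‖| ≤ ‖u - t • p‖ := by
    have := abs_norm_sub_norm_le (t • p) u
    rwa [htp, norm_sub_rev] at this
  calc ‖‖u‖⁻¹ • u - p‖ ≤ ‖(‖u‖⁻¹ - t⁻¹) • u‖ + ‖t⁻¹ • (u - t • p)‖ :=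
        hsplit ▸ norm_add_le _ _
    _ = |t - ‖u‖| / t + ‖u - t • p‖ / t := by
        rw [hfirst, norm_smul, Real.norm_of_nonneg (inv_nonneg.2 ht.le), inv_mul_eq_div]
    _ ≤ 2 * ‖u - t • p‖ / t := by rw [← add_div]; gcongr; linarith

end Ray

section FrechetSubdifferential

variable {n : ℕ}

theorem sub_smul_mem_FSubdiff_of_isLocalMin {f : En n → ℝ} {y z x₀ : En n} {K : ℝ}
    (hmin : IsLocalMin (fun x => f x - ⟪y, x⟫ + K * ‖x - z‖ ^ 2) x₀) :
    y - (2 * K) • (x₀ - z) ∈ FSubdiff f x₀ := by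
  intro ε hε
  have hsmall : ∀ᶠ x in 𝓝 x₀, |K| * ‖x - x₀‖ ≤ ε :=
    ((by fun_prop : Continuous fun x : En n => |K| * ‖x - x₀‖).tendsto' x₀ 0 (by simp)).eventually
      (ge_mem_nhds hε)
  filter_upwards [hmin, hsmall] with x hx hKx
  have hexp : ‖x - z‖ ^ 2 = ‖x₀ - z‖ ^ 2 + 2 * ⟪x₀ - z, x - x₀⟫ + ‖x - x₀‖ ^ 2 := by
    rw [show x - z = (x₀ - z) + (x - x₀) by abel, norm_add_sq_real]
  have hinner : ⟪y - (2 * K) • (x₀ - z), x - x₀⟫ = ⟪y, x⟫ - ⟪y, x₀⟫ - 2 * K * ⟪x₀ - z, x - x₀⟫ := by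
    rw [inner_sub_left, real_inner_smul_left, inner_sub_right]
  have hquad : K * ‖x - x₀‖ ^ 2 ≤ ε * ‖x - x₀‖ := by
    nlinarith [le_abs_self K, norm_nonneg (x - x₀), sq_nonneg ‖x - x₀‖]
  rw [hexp] at hx
  rw [hinner]
  linarith

theorem exists_mem_FSubdiff_of_approx_isMinOn {f : En n → ℝ} (hf : Continuous f) {y z : En n}
    {r δ : ℝ} (hr : 0 < r) (hδ : 0 < δ)
    (happrox : ∀ x ∈ closedBall z r, f z - ⟪y, z⟫ ≤ f x - ⟪y, x⟫ + δ) :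
    ∃ x ∈ closedBall z (r / 2), ∃ v ∈ FSubdiff f x, ‖v - y‖ ≤ 4 * δ / r := by
  set K := 4 * δ / r ^ 2 with hK
  obtain ⟨x, hxB, hxmin⟩ := (isCompact_closedBall z r).exists_isMinOn
    ⟨z, mem_closedBall_self hr.le⟩
    (by fun_prop : Continuous fun x => f x - ⟪y, x⟫ + K * ‖x - z‖ ^ 2).continuousOn
  have hxz : ‖x - z‖ ≤ r / 2 := by
    have hφ : f x - ⟪y, x⟫ + K * ‖x - z‖ ^ 2 ≤ f z - ⟪y, z⟫ + K * ‖z - z‖ ^ 2 :=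
      hxmin (mem_closedBall_self hr.le)
    have hKx : K * ‖x - z‖ ^ 2 ≤ δ := by
      rw [sub_self, norm_zero] at hφ; linarith [happrox x hxB]
    rw [hK, div_mul_eq_mul_div, div_le_iff₀ (by positivity), mul_assoc] at hKx
    have hsq : 4 * ‖x - z‖ ^ 2 ≤ r ^ 2 := le_of_mul_le_mul_left (by linarith) hδ
    nlinarith [norm_nonneg (x - z)]
  have hloc : IsLocalMin (fun x => f x - ⟪y, x⟫ + K * ‖x - z‖ ^ 2) x :=
    hxmin.isLocalMin <| mem_of_superset (isOpen_ball.mem_nhds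
      (mem_ball.2 (by rw [dist_eq_norm]; linarith))) ball_subset_closedBall
  refine ⟨x, mem_closedBall.2 (by rwa [dist_eq_norm]), _,
    sub_smul_mem_FSubdiff_of_isLocalMin hloc, ?_⟩
  rw [sub_sub_cancel_left, norm_neg, norm_smul, Real.norm_of_nonneg (by positivity)]
  calc 2 * K * ‖x - z‖ ≤ 2 * K * (r / 2) := by gcongr
    _ = 4 * δ / r := by rw [hK]; field_simp

end FrechetSubdifferential

section ActiveIndices

theorem continuous_of_forall_isLeast_range {X ι : Type*} [TopologicalSpace X] [Finite ι]
    {fi : ι → X → ℝ} {f : X → ℝ} (hf : ∀ x, IsLeast (range fun i => fi i x) (f x))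
    (hcont : ∀ i, Continuous (fi i)) : Continuous f := by
  cases nonempty_fintype ι
  refine continuous_iff_continuousAt.2 fun x => ?_
  obtain ⟨i₀, -⟩ := (hf x).1
  have hne : (Finset.univ : Finset ι).Nonempty := ⟨i₀, Finset.mem_univ _⟩
  have hf_eq : f = fun x => Finset.univ.inf' hne fun i => fi i x := funext fun x =>
    le_antisymm (Finset.le_inf' _ _ fun i _ => (hf x).2 ⟨i, rfl⟩)
      (by obtain ⟨j, hj⟩ := (hf x).1; exact hj ▸ Finset.inf'_le _ (Finset.mem_univ j))
  rw [hf_eq]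
  exact (Continuous.finset_inf'_apply hne fun i _ => hcont i).continuousAt

/-- The index set `I(x̄, p)` of the paper. -/
def minimalActiveIndices {α ι : Type*} (fi : ι → α → ℝ) (f : α → ℝ) (di : ι → α → ℝ)
    (xb p : α) : Set ι :=
  {i | fi i xb = f xb ∧ ∀ i', fi i' xb = f xb → di i p ≤ di i' p}

theorem minimalActiveIndices_nonempty {α ι : Type*} [Finite ι] {fi : ι → α → ℝ} {f : α → ℝ}
    {xb : α} (hf : IsLeast (range fun i => fi i xb) (f xb)) (di : ι → α → ℝ) (p : α) :
    (minimalActiveIndices fi f di xb p).Nonempty := by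
  obtain ⟨j, hj⟩ := hf.1
  obtain ⟨i₀, hi₀, hmin⟩ := exists_min_image {i | fi i xb = f xb} (fun i => di i p)
    (toFinite _) ⟨j, hj⟩
  exact ⟨i₀, hi₀, hmin⟩

variable {n : ℕ}

theorem HadamardDD.eventually_lt_of_lt {g h dg dh : En n → ℝ} {xb p : En n}
    (hg : HadamardDD g xb dg) (hh : HadamardDD h xb dh) (heq : g xb = h xb) (hlt : dg p < dh p) :
    ∀ᶠ q in 𝓝[>] (0 : ℝ) ×ˢ 𝓝 p, g (xb + q.1 • q.2) < h (xb + q.1 • q.2) := by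
  filter_upwards [(hg p).eventually_lt (hh p) hlt, eventually_mem_nhdsWithin.prod_inl _]
    with q hq (hpos : 0 < q.1)
  rw [div_lt_div_iff_of_pos_right hpos, heq] at hq
  linarith

theorem HadamardDD.eventually_sub_le {g dg : En n → ℝ} {xb : En n} (hg : HadamardDD g xb dg)
    (p : En n) {η : ℝ} (hη : 0 < η) :
    ∀ᶠ t in 𝓝[>] (0 : ℝ), g (xb + t • p) - g xb ≤ t * (dg p + η) := by
  have hray := (hg p).comp (tendsto_id.prodMk (tendsto_const_nhds (x := p)))
  filter_upwards [hray.eventually_lt_const (lt_add_of_pos_right _ hη), self_mem_nhdsWithin]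
    with t ht (hpos : 0 < t)
  have ht : (g (xb + t • p) - g xb) / t < dg p + η := ht
  rw [div_lt_iff₀ hpos] at ht
  linarith

variable {ι : Type*} [Finite ι] {fi : ι → En n → ℝ} {f : En n → ℝ} {di : ι → En n → ℝ}
  {xb : En n}

theorem eventually_exists_mem_minimalActiveIndices_eq
    (hf : ∀ x, IsLeast (range fun i => fi i x) (f x)) (hcont : ∀ i, Continuous (fi i))
    (hdd : ∀ i, HadamardDD (fi i) xb (di i)) (p : En n) :
    ∀ᶠ q in 𝓝[>] (0 : ℝ) ×ˢ 𝓝 p, ∃ j ∈ minimalActiveIndices fi f di xb p,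
      fi j (xb + q.1 • q.2) = f (xb + q.1 • q.2) := by
  obtain ⟨i₀, hact₀, hmin₀⟩ := minimalActiveIndices_nonempty (hf xb) di p
  have hbeaten : ∀ i ∈ (minimalActiveIndices fi f di xb p)ᶜ, ∀ᶠ q in 𝓝[>] (0 : ℝ) ×ˢ 𝓝 p,
      fi i₀ (xb + q.1 • q.2) < fi i (xb + q.1 • q.2) := by
    intro i hi
    by_cases hact : fi i xb = f xb
    · obtain ⟨i', hact', hlt⟩ : ∃ i', fi i' xb = f xb ∧ di i' p < di i p := by
        by_contra! hle
        exact hi ⟨hact, hle⟩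
      exact (hdd i₀).eventually_lt_of_lt (hdd i) (hact₀.trans hact.symm)
        ((hmin₀ i' hact').trans_lt hlt)
    · have hlt : fi i₀ xb < fi i xb :=
        hact₀ ▸ lt_of_le_of_ne ((hf xb).2 ⟨i, rfl⟩) (Ne.symm hact)
      exact (((hcont i₀).tendsto xb).comp (tendsto_add_smul_nhdsGT_prod xb p)).eventually_lt
        (((hcont i).tendsto xb).comp (tendsto_add_smul_nhdsGT_prod xb p)) hlt
  filter_upwards [(eventually_all_finite (toFinite _)).2 hbeaten] with q hq
  obtain ⟨j, hj⟩ := (hf (xb + q.1 • q.2)).1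
  refine ⟨j, by_contra fun hj' => ?_, hj⟩
  exact (hq j hj').not_ge (hj.trans_le ((hf _).2 ⟨i₀, rfl⟩))

end ActiveIndices

section Approximation

variable {n : ℕ}

theorem forall_closedBall_sub_inner_le_of_ray_bounds {f : En n → ℝ} {xb p y : En n}
    {t ρ η : ℝ} (hp : ‖p‖ = 1) (ht : 0 < t) (hρ : ρ ≤ 1) (hη : 0 ≤ η)
    (hlow : ∀ x ∈ closedBall (xb + t • p) (ρ * t), f xb + ⟪y, x - xb⟫ - η * ‖x - xb‖ ≤ f x)
    (hup : f (xb + t • p) ≤ f xb + t * (⟪y, p⟫ + η)) :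
    ∀ x ∈ closedBall (xb + t • p) (ρ * t),
      f (xb + t • p) - ⟪y, xb + t • p⟫ ≤ f x - ⟪y, x⟫ + 3 * η * t := by
  intro x hx
  have hxb : ‖x - xb‖ ≤ 2 * t := by
    have hxz : ‖x - xb - t • p‖ ≤ ρ * t := by
      rwa [mem_closedBall, dist_eq_norm, ← sub_sub] at hx
    have := norm_le_norm_add_norm_sub' (x - xb) (t • p)
    rw [norm_smul, hp, Real.norm_of_nonneg ht.le, mul_one] at this
    nlinarith
  have hx_low := hlow x hx
  rw [inner_sub_right] at hx_low
  rw [inner_add_right, real_inner_smul_right]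
  nlinarith

variable {ι : Type*} [Finite ι] {fi : ι → En n → ℝ} {f : En n → ℝ}
  {di : ι → En n → ℝ} {xb p y : En n}

theorem exists_near_ray_mem_FSubdiff (hf : ∀ x, IsLeast (range fun i => fi i x) (f x))
    (hcont : ∀ i, Continuous (fi i)) (hdd : ∀ i, HadamardDD (fi i) xb (di i)) (hp : ‖p‖ = 1)
    (hy : ∀ i ∈ minimalActiveIndices fi f di xb p, y ∈ FSubdiff (fi i) xb ∧ ⟪y, p⟫ = di i p)
    {ε : ℝ} (hε : 0 < ε) :
    ∃ x v, x ≠ xb ∧ ‖x - xb‖ ≤ ε ∧ ‖‖x - xb‖⁻¹ • (x - xb) - p‖ ≤ ε ∧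
      v ∈ FSubdiff f x ∧ ‖v - y‖ ≤ ε := by
  obtain ⟨ρ₀, hρ₀, hcone⟩ := exists_forall_closedBall_ray_of_eventually_prod
    (P := fun x => ∃ j ∈ minimalActiveIndices fi f di xb p, fi j x = f x)
    (eventually_exists_mem_minimalActiveIndices_eq hf hcont hdd p)
  obtain ⟨i₀, hi₀⟩ := minimalActiveIndices_nonempty (hf xb) di p
  set ρ := min ρ₀ (min 1 ε)
  have hρpos : 0 < ρ := lt_min hρ₀ (lt_min one_pos hε)
  have hρ1 : ρ ≤ 1 := (min_le_right _ _).trans (min_le_left _ _)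
  set η := ε * ρ / 12
  have hηpos : 0 < η := by positivity
  have hlow := eventually_forall_closedBall_ray_of_eventually_nhds
    ((eventually_all_finite (toFinite _)).2 fun j hj => (hy j hj).1 η hηpos) p ρ
  obtain ⟨t, ⟨⟨hcone_t, hlow_t⟩, hup_t⟩, ht, htε⟩ :=
    (((hcone.and hlow).and ((hdd i₀).eventually_sub_le p hηpos)).and
      (Ioo_mem_nhdsGT (half_pos hε))).exists
  have hf_low : ∀ x ∈ closedBall (xb + t • p) (ρ * t),
      f xb + ⟪y, x - xb⟫ - η * ‖x - xb‖ ≤ f x := by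
    intro x hx
    obtain ⟨j, hj, hjx⟩ := hcone_t x (closedBall_subset_closedBall
      (mul_le_mul_of_nonneg_right (min_le_left _ _) ht.le) hx)
    linarith [hlow_t x hx j hj, hj.1]
  have hf_up : f (xb + t • p) ≤ f xb + t * (⟪y, p⟫ + η) := by
    rw [← hi₀.1, (hy i₀ hi₀).2]
    linarith [hup_t, (hf (xb + t • p)).2 ⟨i₀, rfl⟩]
  obtain ⟨x, hx, v, hv, hvy⟩ := exists_mem_FSubdiff_of_approx_isMinOn
    (continuous_of_forall_isLeast_range hf hcont) (by positivity) (by positivity)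
    (forall_closedBall_sub_inner_le_of_ray_bounds hp ht hρ1 hηpos.le hf_low hf_up)
  have hxt : ‖x - xb - t • p‖ ≤ ρ * t / 2 := by
    rwa [mem_closedBall, dist_eq_norm, ← sub_sub] at hx
  have htp : ‖t • p‖ = t := by rw [norm_smul, hp, Real.norm_of_nonneg ht.le, mul_one]
  refine ⟨x, v, ?_, ?_, ?_, hv, hvy.trans_eq (by field_simp; ring)⟩
  · rintro rfl
    rw [sub_self, zero_sub, norm_neg, htp] at hxt
    nlinarith
  · have := norm_le_norm_add_norm_sub' (x - xb) (t • p)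
    rw [htp] at this
    nlinarith
  · calc ‖‖x - xb‖⁻¹ • (x - xb) - p‖ ≤ 2 * ‖x - xb - t • p‖ / t :=
          norm_inv_norm_smul_sub_le hp ht _
      _ ≤ 2 * (ρ * t / 2) / t := by gcongr
      _ = ρ := by field_simp
      _ ≤ ε := (min_le_right _ _).trans (min_le_right _ _)

end Approximation

theorem tendsto_of_forall_norm_sub_le_inv_succ {E : Type*} [SeminormedAddCommGroup E]
    {u : ℕ → E} {a : E} (h : ∀ k : ℕ, ‖u k - a‖ ≤ ((k : ℝ) + 1)⁻¹) : Tendsto u atTop (𝓝 a) :=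
  tendsto_iff_norm_sub_tendsto_zero.2 <| squeeze_zero (fun _ => norm_nonneg _) h <| by
    simpa using tendsto_one_div_add_atTop_nhds_zero_nat (𝕜 := ℝ)

theorem main_technical_lemma_general {n : ℕ} {ι : Type*} [Fintype ι]
    (fi : ι → En n → ℝ) (f : En n → ℝ)
    (hf : ∀ x : En n, IsLeast (Set.range fun i => fi i x) (f x))
    (xb : En n)
    (hcont : ∀ i, Continuous (fi i))
    (di : ι → En n → ℝ) (hdd : ∀ i, HadamardDD (fi i) xb (di i))
    (p : En n) (hp : ‖p‖ = 1) (y : En n)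
    (hy : ∀ i : ι,
      (fi i xb = f xb ∧ ∀ i' : ι, fi i' xb = f xb → di i p ≤ di i' p) →
        y ∈ FSubdiff (fi i) xb ∧ ⟪y, p⟫ = di i p) :
    ∃ xk yk : ℕ → En n,
      Tendsto xk atTop (𝓝 xb) ∧ (∀ k, xk k ≠ xb) ∧
      Tendsto (fun k => ‖xk k - xb‖⁻¹ • (xk k - xb)) atTop (𝓝 p) ∧
      (∀ k, yk k ∈ FSubdiff f (xk k)) ∧ Tendsto yk atTop (𝓝 y) := by
  choose xk yk hne hdist hdir hsub hclose using fun k : ℕ =>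
    exists_near_ray_mem_FSubdiff hf hcont hdd hp hy (inv_pos.2 (Nat.cast_add_one_pos k))
  exact ⟨xk, yk, tendsto_of_forall_norm_sub_le_inv_succ hdist, hne,
    tendsto_of_forall_norm_sub_le_inv_succ hdir, hsub,
    tendsto_of_forall_norm_sub_le_inv_succ hclose⟩

/-- main technical lemma: for a unit direction `p` and any
`y ∈ ⋂_{i ∈ I(xb,p)} Argmax_{v ∈ ∂f_i(xb)} ⟪v,p⟫` there are sequences `x_k → xb`
with `(x_k - xb)/‖x_k - xb‖ → p` and `y_k → y` with `y_k ∈ ∂f(x_k)`. -/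
theorem main_technical_lemma {n : ℕ} {ι : Type*} [Fintype ι]
    (X : Set (En n)) (hX : IsOpen X)
    (fi : ι → En n → ℝ) (f : En n → ℝ)
    (hf : ∀ x : En n, IsLeast (Set.range fun i => fi i x) (f x))
    (xb : En n) (hxb : xb ∈ X)
    (hcont : ∀ i, Continuous (fi i))
    (di : ι → En n → ℝ) (hdd : ∀ i, HadamardDD (fi i) xb (di i))
    (hconv : ∀ i, ConvexOn ℝ Set.univ (di i))
    (hpos : ∀ i (p : En n) (c : ℝ), 0 < c → di i (c • p) = c * di i p)
    (p : En n) (hp : ‖p‖ = 1) (y : En n)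
    (hy : ∀ i : ι,
      (fi i xb = f xb ∧ ∀ i' : ι, fi i' xb = f xb → di i p ≤ di i' p) →
        y ∈ FSubdiff (fi i) xb ∧ ⟪y, p⟫ = di i p) :
    ∃ xk yk : ℕ → En n,
      Tendsto xk atTop (𝓝 xb) ∧ (∀ k, xk k ≠ xb) ∧
      Tendsto (fun k => ‖xk k - xb‖⁻¹ • (xk k - xb)) atTop (𝓝 p) ∧
      (∀ k, yk k ∈ FSubdiff f (xk k)) ∧ Tendsto yk atTop (𝓝 y) :=
  main_technical_lemma_general fi f hf xb hcont di hdd p hp y hy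
end
end

section
/- Let f = min_{i∈I} f_i on open X ⊆ ℝⁿ with I finite and each f_i Hadamard directionally differentiable at x̄ with sublinear derivative. Then ⋃_{p∈S, f'(x̄;p)>0} ⋂_{i∈I(x̄,p)} Argmax_{v∈∂f_i(x̄)} ⟨v,p⟩ ⊆ Limsup_{x→x̄, f(x)>f(x̄)} ∂f(x), where S is the unit sphere and Limsup denotes the outer (Painlevé–Kuratowski) limit of Fréchet subdifferentials: the set of all limits y of sequences y_k ∈ ∂f(x_k) with x_k → x̄ and f(x_k) > f(x̄). -/
open Filter Topology Set Metric
open scoped RealInnerProductSpace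

noncomputable section

/-! Near `xb` every inactive piece lies strictly above an active one, so `f` is itself Hadamard
directionally differentiable at `xb`, with derivative `D = min_{i active} dᵢ`; such a derivative is
automatically continuous, and the expansion is uniform over compact sets of directions. For `y` in
the left-hand side with direction `p`, one has `⟪y, p⟫ = D p > 0` and `⟪y, ·⟫ ≤ D` near `p`: the
minimizing active pieces satisfy `⟪y, ·⟫ ≤ dᵢ` because `y ∈ ∂fᵢ(xb)`, and the other active pieces
exceed `⟪y, p⟫` at `p`. Minimizing `f - ⟪y, ·⟫ + ‖· - c‖² / t` over the ball of radius `t r`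
around `c = xb + t p` then yields, for small `t`, an interior minimizer `z` with `f z > f xb`, and
`y - 2 (z - c) / t ∈ ∂f(z)` lies within `2 r` of `y`. -/

namespace HadamardDD

variable {n : ℕ} {g : En n → ℝ} {x : En n} {d : En n → ℝ}

lemma tendsto_ray (h : HadamardDD g x d) (u : En n) :
    Tendsto (fun t : ℝ => (g (x + t • u) - g x) / t) (𝓝[>] 0) (𝓝 (d u)) :=
  (h u).comp (f := fun t : ℝ => (t, u)) (tendsto_id.prodMk tendsto_const_nhds)

lemma tendsto_apply_add_smul (h : HadamardDD g x d) (p : En n) :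
    Tendsto (fun q : ℝ × En n => g (x + q.1 • q.2)) ((𝓝[>] 0) ×ˢ 𝓝 p) (𝓝 (g x)) := by
  have ht : Tendsto (fun q : ℝ × En n => q.1) ((𝓝[>] 0) ×ˢ 𝓝 p) (𝓝 0) :=
    tendsto_fst.mono_right nhdsWithin_le_nhds
  have hlim := tendsto_const_nhds (x := g x) |>.add (ht.mul (h p))
  rw [zero_mul, add_zero] at hlim
  refine hlim.congr' ?_
  filter_upwards [tendsto_fst.eventually self_mem_nhdsWithin] with q hq
  field_simp [hq.ne']
  ring

lemma continuous (h : HadamardDD g x d) : Continuous d := by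
  refine continuous_iff_continuousAt.2 fun p => Metric.tendsto_nhds.2 fun ε hε => ?_
  obtain ⟨T, hT, V, hV, hTV⟩ :=
    eventually_prod_iff.1 ((h p).eventually (closedBall_mem_nhds (d p) (half_pos hε)))
  filter_upwards [hV] with q hq
  have hdq : d q ∈ closedBall (d p) (ε / 2) :=
    isClosed_closedBall.mem_of_tendsto (h.tendsto_ray q) (hT.mono fun _ ht => hTV ht hq)
  exact (mem_closedBall.1 hdq).trans_lt (half_lt_self hε)

lemma eventually_forall_abs_le (h : HadamardDD g x d) {K : Set (En n)} (hK : IsCompact K)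
    {ε : ℝ} (hε : 0 < ε) :
    ∀ᶠ t in 𝓝[>] (0 : ℝ), ∀ u ∈ K, |g (x + t • u) - g x - t * d u| ≤ ε * t := by
  have hloc : ∀ u ∈ K, ∀ᶠ q : ℝ × En n in (𝓝[>] 0) ×ˢ 𝓝 u,
      |(g (x + q.1 • q.2) - g x) / q.1 - d q.2| < ε := by
    intro u _
    have hlim := (h u).sub ((h.continuous.tendsto u).comp tendsto_snd)
    rw [sub_self] at hlim
    simpa [Real.dist_eq] using Metric.tendsto_nhds.1 hlim ε hε
  have hunif : ∀ᶠ q : ℝ × En n in (𝓝[>] 0) ×ˢ 𝓝ˢ K,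
      |(g (x + q.1 • q.2) - g x) / q.1 - d q.2| < ε :=
    hK.mem_prod_nhdsSet_of_forall hloc
  filter_upwards [hunif.curry, self_mem_nhdsWithin] with t ht (htpos : 0 < t) u hu
  have hscale : g (x + t • u) - g x - t * d u = t * ((g (x + t • u) - g x) / t - d u) := by
    field_simp
  rw [hscale, abs_mul, abs_of_pos htpos, mul_comm]
  exact mul_le_mul_of_nonneg_right (ht.self_of_nhdsSet u hu).le htpos.le

lemma inner_le_of_mem_fSubdiff (h : HadamardDD g x d) {v : En n} (hv : v ∈ FSubdiff g x)
    (u : En n) : ⟪v, u⟫ ≤ d u := by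
  refine le_of_forall_pos_le_add fun ε hε => ?_
  set ε' := ε / (‖u‖ + 1)
  have hε' : ε' * ‖u‖ ≤ ε := by
    rw [div_mul_eq_mul_div, div_le_iff₀ (by positivity)]
    nlinarith [norm_nonneg u]
  have hray : Tendsto (fun t : ℝ => x + t • u) (𝓝[>] 0) (𝓝 x) := by
    refine ((continuous_const.add (continuous_id.smul continuous_const)).tendsto' 0 x ?_).mono_left
      nhdsWithin_le_nhds
    simp
  have hbound : ∀ᶠ t in 𝓝[>] (0 : ℝ), ⟪v, u⟫ - ε' * ‖u‖ ≤ (g (x + t • u) - g x) / t := by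
    filter_upwards [hray.eventually (hv ε' (by positivity)), self_mem_nhdsWithin]
      with t ht (htpos : 0 < t)
    rw [add_sub_cancel_left, real_inner_smul_right, norm_smul, Real.norm_eq_abs,
      abs_of_pos htpos] at ht
    rw [le_div_iff₀ htpos]
    nlinarith
  linarith [ge_of_tendsto (h.tendsto_ray u) hbound]

end HadamardDD

lemma Finset.inf'_eq_of_isLeast_range {α ι : Type*} [LinearOrder α] {g : ι → α} {a : α}
    (ha : IsLeast (Set.range g) a) {A : Finset ι} (hA : A.Nonempty)
    (hgap : ∀ i ∉ A, ∃ j ∈ A, g j < g i) : A.inf' hA g = a := by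
  obtain ⟨m, hm⟩ := ha.1
  refine le_antisymm ?_ (Finset.le_inf' _ _ fun i _ => ha.2 ⟨i, rfl⟩)
  by_cases hmA : m ∈ A
  · exact hm ▸ A.inf'_le g hmA
  · obtain ⟨j, -, hj⟩ := hgap m hmA
    exact absurd (ha.2 ⟨j, rfl⟩) (not_le.2 (hm ▸ hj))

lemma continuous_of_isLeast_range {X ι : Type*} [TopologicalSpace X] [Nonempty X] [Fintype ι]
    {fi : ι → X → ℝ} {f : X → ℝ} (hf : ∀ z, IsLeast (range fun i => fi i z) (f z))
    (hcont : ∀ i, Continuous (fi i)) : Continuous f := by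
  obtain ⟨j, -⟩ := (hf (Classical.arbitrary X)).1
  have : Nonempty ι := ⟨j⟩
  have hfeq : f = fun z => Finset.univ.inf' Finset.univ_nonempty fun i => fi i z :=
    funext fun z => (Finset.inf'_eq_of_isLeast_range (hf z) _ (by simp)).symm
  rw [hfeq]
  exact Continuous.finset_inf'_apply _ fun i _ => hcont i

theorem HadamardDD.of_isLeast_range {n : ℕ} {ι : Type*} [Finite ι] {fi : ι → En n → ℝ}
    {f : En n → ℝ} {x : En n} {di : ι → En n → ℝ}
    (hf : ∀ z, IsLeast (range fun i => fi i z) (f z)) (hdd : ∀ i, HadamardDD (fi i) x (di i))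
    {A : Finset ι} (hA : A.Nonempty) (hAx : ∀ i, i ∈ A ↔ fi i x = f x) :
    HadamardDD f x fun u => A.inf' hA fun i => di i u := by
  intro p
  obtain ⟨j, hj⟩ := id hA
  have hgap : ∀ᶠ q : ℝ × En n in (𝓝[>] 0) ×ˢ 𝓝 p,
      ∀ i ∉ A, ∃ j ∈ A, fi j (x + q.1 • q.2) < fi i (x + q.1 • q.2) := by
    refine eventually_all.2 fun i => ?_
    by_cases hi : i ∈ A
    · exact Eventually.of_forall fun _ h => absurd hi h
    · have hlt : fi j x < fi i x := by
        rw [(hAx j).1 hj]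
        exact lt_of_le_of_ne ((hf x).2 ⟨i, rfl⟩) (Ne.symm (mt (hAx i).2 hi))
      exact (((hdd j).tendsto_apply_add_smul p).eventually_lt ((hdd i).tendsto_apply_add_smul p) hlt).mono
        fun _ h _ => ⟨j, hj, h⟩
  refine (Tendsto.finset_inf'_nhds_apply hA fun i _ => hdd i p).congr' ?_
  filter_upwards [hgap, tendsto_fst.eventually self_mem_nhdsWithin] with q hq ht
  have hmono : Monotone fun a : ℝ => (a - f x) / q.1 := fun a b hab =>
    div_le_div_of_nonneg_right (sub_le_sub_right hab _) (le_of_lt ht)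
  rw [← Finset.inf'_eq_of_isLeast_range (hf _) hA hq,
    Finset.apply_inf'_eq_inf'_comp (g := fun a : ℝ => (a - f x) / q.1) _ hmono.map_inf]
  exact Finset.inf'_congr _ rfl fun i hi => by simp [(hAx i).1 hi]

lemma exists_mem_ball_isLocalMin_add_sq_norm {E : Type*} [NormedAddCommGroup E]
    [ProperSpace E] {F : E → ℝ} (hF : Continuous F) {c : E} {ρ s m δ : ℝ} (hρ : 0 ≤ ρ)
    (hs : 0 < s) (hlow : ∀ z ∈ closedBall c ρ, m ≤ F z) (hc : F c ≤ m + δ)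
    (hδ : δ < s * ρ ^ 2) :
    ∃ z ∈ ball c ρ, IsLocalMin (fun w => F w + s * ‖w - c‖ ^ 2) z := by
  obtain ⟨z, hz, hmin⟩ := (isCompact_closedBall c ρ).exists_isMinOn (nonempty_closedBall.2 hρ)
    (show Continuous fun w => F w + s * ‖w - c‖ ^ 2 by fun_prop).continuousOn
  have hzc : s * ‖z - c‖ ^ 2 < s * ρ ^ 2 := by
    have := isMinOn_iff.1 hmin c (mem_closedBall_self hρ)
    simp only [sub_self, norm_zero, ne_eq, OfNat.ofNat_ne_zero, not_false_eq_true, zero_pow,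
      mul_zero, add_zero] at this
    linarith [hlow z hz]
  have hzball : z ∈ ball c ρ := by
    rw [mem_ball, dist_eq_norm]
    exact (pow_lt_pow_iff_left₀ (norm_nonneg _) hρ two_ne_zero).1 (lt_of_mul_lt_mul_left hzc hs.le)
  exact ⟨z, hzball, hmin.isLocalMin (closedBall_mem_nhds_of_mem hzball)⟩

lemma mem_fSubdiff_of_isLocalMin_sub {n : ℕ} {f φ : En n → ℝ} {x v : En n}
    (hφ : HasGradientAt φ v x) (hmin : IsLocalMin (fun z => f z - φ z) x) :
    v ∈ FSubdiff f x := by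
  intro ε hε
  filter_upwards [hmin, (hasGradientAt_iff_isLittleO.1 hφ).bound hε] with z hz hφz
  rw [Real.norm_eq_abs] at hφz
  linarith [neg_abs_le (φ z - φ x - ⟪v, z - x⟫)]

lemma hasGradientAt_inner_sub_mul_sq_norm {n : ℕ} (y c z : En n) (s : ℝ) :
    HasGradientAt (fun w => ⟪y, w⟫ - s * ‖w - c‖ ^ 2) (y - (2 * s) • (z - c)) z := by
  have hlin : HasFDerivAt (fun w : En n => ⟪y, w⟫) (innerSL ℝ y) z := (innerSL ℝ y).hasFDerivAt
  have hsq := (((hasFDerivAt_id z).sub_const c).norm_sq).const_mul s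
  rw [hasGradientAt_iff_hasFDerivAt]
  refine (hlin.sub hsq).congr_fderiv ?_
  ext w
  simp only [id_eq, map_sub, ContinuousLinearMap.comp_id, sub_apply, coe_innerSL_apply,
    smul_apply, nsmul_eq_mul, Nat.cast_ofNat, smul_eq_mul, map_smul,
    InnerProductSpace.toDual_apply_apply, sub_right_inj]
  ring

lemma exists_mem_closedBall_eq_add_smul {n : ℕ} {x p z : En n} {t r : ℝ} (ht : 0 < t)
    (hz : z ∈ closedBall (x + t • p) (t * r)) : ∃ u ∈ closedBall p r, z = x + t • u := by
  refine ⟨p + t⁻¹ • (z - (x + t • p)), ?_, ?_⟩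
  · rw [mem_closedBall, dist_eq_norm, add_sub_cancel_left, norm_smul, norm_inv,
      Real.norm_eq_abs, abs_of_pos ht, inv_mul_le_iff₀ ht, ← dist_eq_norm]
    exact hz
  · rw [smul_add, smul_smul, mul_inv_cancel₀ ht.ne', one_smul]
    abel

lemma exists_mem_fSubdiff_of_expansion {n : ℕ} {f D : En n → ℝ} (hf : Continuous f)
    {x p y : En n} {r t ε : ℝ} (hr : 0 ≤ r) (ht : 0 < t)
    (hexp : ∀ u ∈ closedBall p r, |f (x + t • u) - f x - t * D u| ≤ ε * t)
    (hsupp : ∀ u ∈ closedBall p r, ⟪y, u⟫ ≤ D u) (hDp : D p ≤ ⟪y, p⟫)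
    (hεD : ∀ u ∈ closedBall p r, ε < D u) (hεr : 2 * ε < r ^ 2) :
    ∃ z ∈ ball (x + t • p) (t * r),
      f x < f z ∧ y - (2 * t⁻¹) • (z - (x + t • p)) ∈ FSubdiff f z := by
  set c := x + t • p
  have hp : p ∈ closedBall p r := mem_closedBall_self hr
  have hlow : ∀ z ∈ closedBall c (t * r), f x - ⟪y, x⟫ - ε * t ≤ f z - ⟪y, z⟫ := by
    intro z hz
    obtain ⟨u, hu, rfl⟩ := exists_mem_closedBall_eq_add_smul ht hz
    have := mul_le_mul_of_nonneg_left (hsupp u hu) ht.le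
    rw [inner_add_right, real_inner_smul_right]
    linarith [(abs_le.1 (hexp u hu)).1]
  have hc : f c - ⟪y, c⟫ ≤ f x - ⟪y, x⟫ - ε * t + 2 * ε * t := by
    have := mul_le_mul_of_nonneg_left hDp ht.le
    rw [inner_add_right, real_inner_smul_right]
    linarith [(abs_le.1 (hexp p hp)).2]
  obtain ⟨z, hz, hmin⟩ := exists_mem_ball_isLocalMin_add_sq_norm (F := fun w => f w - ⟪y, w⟫)
    (by fun_prop) (by positivity) (inv_pos.2 ht) hlow hc
    (by rw [mul_pow, ← mul_assoc, sq t, ← mul_assoc, inv_mul_cancel₀ ht.ne', one_mul]; nlinarith)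
  refine ⟨z, hz, ?_,
    mem_fSubdiff_of_isLocalMin_sub (hasGradientAt_inner_sub_mul_sq_norm y c z _) ?_⟩
  · obtain ⟨u, hu, rfl⟩ := exists_mem_closedBall_eq_add_smul ht (ball_subset_closedBall hz)
    have := mul_lt_mul_of_pos_left (hεD u hu) ht
    linarith [(abs_le.1 (hexp u hu)).1]
  · have hφ : (fun w => f w - (⟪y, w⟫ - t⁻¹ * ‖w - c‖ ^ 2))
        = fun w => f w - ⟪y, w⟫ + t⁻¹ * ‖w - c‖ ^ 2 := by
      funext w
      ring
    rw [hφ]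
    exact hmin

lemma mem_outerLim_of_forall_pos {n : ℕ} {f : En n → ℝ} {x y : En n}
    (h : ∀ η > 0, ∃ z v, dist z x < η ∧ f x < f z ∧ v ∈ FSubdiff f z ∧ dist v y < η) :
    y ∈ OuterLim f x := by
  choose z v hzx hfz hv hvy using fun k : ℕ => h (1 / (k + 1)) Nat.one_div_pos_of_nat
  refine ⟨z, v, ?_, hfz, hv, ?_⟩ <;> rw [tendsto_iff_dist_tendsto_zero]
  · exact squeeze_zero (fun _ => dist_nonneg) (fun k => (hzx k).le)
      tendsto_one_div_add_atTop_nhds_zero_nat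
  · exact squeeze_zero (fun _ => dist_nonneg) (fun k => (hvy k).le)
      tendsto_one_div_add_atTop_nhds_zero_nat

theorem mem_outerLim_of_hadamardDD {n : ℕ} {f D : En n → ℝ} (hf : Continuous f)
    {x p y : En n} (hdd : HadamardDD f x D) (hDp : D p = ⟪y, p⟫) (hpos : 0 < D p)
    (hsupp : ∀ᶠ u in 𝓝 p, ⟪y, u⟫ ≤ D u) : y ∈ OuterLim f x := by
  obtain ⟨r₀, hr₀, hball⟩ : ∃ r₀ > 0, ∀ u ∈ closedBall p r₀, ⟪y, u⟫ ≤ D u ∧ D p / 2 < D u :=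
    nhds_basis_closedBall.eventually_iff.1
      (hsupp.and (hdd.continuous.continuousAt.eventually (lt_mem_nhds (half_lt_self hpos))))
  refine mem_outerLim_of_forall_pos fun η hη => ?_
  set r := min r₀ (η / 3)
  have hr : 0 < r := lt_min hr₀ (by positivity)
  have hrr₀ : closedBall p r ⊆ closedBall p r₀ := closedBall_subset_closedBall (min_le_left _ _)
  set ε := min (r ^ 2 / 4) (D p / 2)
  have hε : 0 < ε := lt_min (by positivity) (by positivity)
  have hsmall : ∀ᶠ t in 𝓝 (0 : ℝ), t * (r + ‖p‖) < η :=
    (Continuous.tendsto' (by fun_prop) 0 0 (by simp)).eventually (gt_mem_nhds hη)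
  obtain ⟨t, ⟨hexp, htη⟩, ht⟩ := (((hdd.eventually_forall_abs_le (isCompact_closedBall p r) hε).and
    (nhdsWithin_le_nhds hsmall)).and self_mem_nhdsWithin).exists
  obtain ⟨z, hz, hfz, hv⟩ := exists_mem_fSubdiff_of_expansion hf hr.le ht hexp
    (fun u hu => (hball u (hrr₀ hu)).1) hDp.le
    (fun u hu => (min_le_right _ _).trans_lt (hball u (hrr₀ hu)).2)
    (by nlinarith [min_le_left (r ^ 2 / 4) (D p / 2)])
  have hr3 : r ≤ η / 3 := min_le_right _ _
  have hzc : ‖z - (x + t • p)‖ < t * r := by rwa [← dist_eq_norm, ← mem_ball]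
  refine ⟨z, _, ?_, hfz, hv, ?_⟩
  · calc dist z x ≤ ‖z - (x + t • p)‖ + ‖(x + t • p) - x‖ := by
          rw [dist_eq_norm]; exact norm_sub_le_norm_sub_add_norm_sub _ _ _
      _ < t * r + t * ‖p‖ := by
          rw [add_sub_cancel_left, norm_smul, Real.norm_eq_abs, abs_of_pos ht]; linarith
      _ < η := by linarith
  · calc dist (y - (2 * t⁻¹) • (z - (x + t • p))) y = 2 * t⁻¹ * ‖z - (x + t • p)‖ := by
          rw [dist_eq_norm, sub_sub_cancel_left, norm_neg, norm_smul, Real.norm_eq_abs,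
            abs_of_pos (by positivity)]
      _ < 2 * t⁻¹ * (t * r) := by gcongr
      _ < η := by rw [← mul_assoc, mul_assoc 2, inv_mul_cancel₀ ht.ne']; linarith

theorem union_subset_outerLim_general {n : ℕ} {ι : Type*} [Fintype ι]
    (fi : ι → En n → ℝ) (f : En n → ℝ)
    (hf : ∀ x : En n, IsLeast (Set.range fun i => fi i x) (f x))
    (xb : En n)
    (hcont : ∀ i, Continuous (fi i))
    (di : ι → En n → ℝ) (hdd : ∀ i, HadamardDD (fi i) xb (di i)) :
    {y : En n | ∃ p : En n, ‖p‖ = 1 ∧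
        (∀ i : ι, fi i xb = f xb → 0 < di i p) ∧
        (∀ i : ι,
          (fi i xb = f xb ∧ ∀ i' : ι, fi i' xb = f xb → di i p ≤ di i' p) →
            y ∈ FSubdiff (fi i) xb ∧ ⟪y, p⟫ = di i p)} ⊆ OuterLim f xb := by
  classical
  rintro y ⟨p, -, hpos, hy⟩
  set A := Finset.univ.filter fun i => fi i xb = f xb
  have hA : ∀ i, i ∈ A ↔ fi i xb = f xb := by simp [A]
  have hAne : A.Nonempty := let ⟨j, hj⟩ := (hf xb).1; ⟨j, (hA j).2 hj⟩
  obtain ⟨i₀, hi₀, hi₀min⟩ := A.exists_min_image (fun i => di i p) hAne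
  have hyp : ⟪y, p⟫ = di i₀ p :=
    (hy i₀ ⟨(hA i₀).1 hi₀, fun i hi => hi₀min i ((hA i).2 hi)⟩).2
  have hDp : A.inf' hAne (fun i => di i p) = ⟪y, p⟫ :=
    hyp ▸ le_antisymm (A.inf'_le _ hi₀) (Finset.le_inf' _ _ hi₀min)
  refine mem_outerLim_of_hadamardDD (continuous_of_isLeast_range hf hcont)
    (HadamardDD.of_isLeast_range hf hdd hAne hA) hDp (hDp ▸ hyp ▸ hpos i₀ ((hA i₀).1 hi₀)) ?_
  refine ((eventually_all_finset A).2 fun i hi => ?_).mono fun u hu => Finset.le_inf' _ _ hu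
  by_cases hmin : ∀ i', fi i' xb = f xb → di i p ≤ di i' p
  · exact Eventually.of_forall ((hdd i).inner_le_of_mem_fSubdiff (hy i ⟨(hA i).1 hi, hmin⟩).1)
  · push Not at hmin
    obtain ⟨i', hi', hlt⟩ := hmin
    have hlt' : ⟪y, p⟫ < di i p := hyp ▸ (hi₀min i' ((hA i').2 hi')).trans_lt hlt
    exact (((continuous_const.inner continuous_id).tendsto p).eventually_lt
      ((hdd i).continuous.tendsto p) hlt').mono fun _ => le_of_lt

/-- the union over unit directions `p` with `f'(xb;p) > 0` of
`⋂_{i ∈ I(xb,p)} Argmax_{v ∈ ∂f_i(xb)} ⟪v,p⟫` is contained in the outer limit of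
Fréchet subdifferentials of `f` along `x → xb`, `f x > f xb`. -/
theorem union_subset_outerLim {n : ℕ} {ι : Type*} [Fintype ι]
    (X : Set (En n)) (hX : IsOpen X)
    (fi : ι → En n → ℝ) (f : En n → ℝ)
    (hf : ∀ x : En n, IsLeast (Set.range fun i => fi i x) (f x))
    (xb : En n) (hxb : xb ∈ X)
    (hcont : ∀ i, Continuous (fi i))
    (di : ι → En n → ℝ) (hdd : ∀ i, HadamardDD (fi i) xb (di i))
    (hconv : ∀ i, ConvexOn ℝ Set.univ (di i))
    (hpos : ∀ i (p : En n) (c : ℝ), 0 < c → di i (c • p) = c * di i p) :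
    {y : En n | ∃ p : En n, ‖p‖ = 1 ∧
        (∀ i : ι, fi i xb = f xb → 0 < di i p) ∧
        (∀ i : ι,
          (fi i xb = f xb ∧ ∀ i' : ι, fi i' xb = f xb → di i p ≤ di i' p) →
            y ∈ FSubdiff (fi i) xb ∧ ⟪y, p⟫ = di i p)} ⊆ OuterLim f xb :=
  union_subset_outerLim_general fi f hf xb hcont di hdd
end
end

section
/- Let g(x) = max_{j∈J} g_j(x) with J finite and g_j ∈ C¹(X). Define D(x̄) as the collection of subsets D ⊆ J(x̄) for which the system ⟨∇g_j(x̄), d⟩ = 1 for j ∈ D and ⟨∇g_j(x̄), d⟩ < 1 for j ∈ J(x̄)\D is consistent for some d ∈ ℝⁿ. Then ⋃_{D∈D(x̄)} conv{ ∇g_j(x̄) : j ∈ D } = ⋃_{p∈S, g'(x̄;p)>0} Argmax_{v∈∂g(x̄)} ⟨v,p⟩. -/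
open Filter Topology Set Metric
open scoped RealInnerProductSpace

noncomputable section

/-! `D` is consistent exactly when `conv {v j | j ∈ D}` is the face of `conv {v j | j ∈ A}`
exposed by a direction `d` on which the maximal value of `⟪·, d⟫` is `1`. Rescaling `d` onto the
unit sphere, or conversely dividing an exposing unit direction `p` by its (positive) maximal
value, passes between the two sides. -/

section Face

variable {𝕜 E : Type*} [Ring 𝕜] [LinearOrder 𝕜] [IsStrictOrderedRing 𝕜]
  [AddCommGroup E] [Module 𝕜 E] {f : E → 𝕜}

/-- Mixing a point below the level `M` with any other point of the set, with positive weights,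
stays strictly below `M`. -/
lemma convex_setOf_lt_union_convexHull (hf : IsLinearMap 𝕜 f) (s : Set E) (M : 𝕜) :
    Convex 𝕜 ({x | f x < M} ∪ convexHull 𝕜 {x ∈ s | f x = M}) := by
  have hface : convexHull 𝕜 {x ∈ s | f x = M} ⊆ {x | f x = M} :=
    convexHull_min (fun x hx => hx.2) (convex_hyperplane hf M)
  have hle : ∀ x ∈ {x | f x < M} ∪ convexHull 𝕜 {x ∈ s | f x = M}, f x ≤ M := by
    rintro x (hx | hx)
    exacts [le_of_lt hx, (hface hx).le]
  refine convex_iff_pairwise_pos.2 fun x hx y hy _ a b ha hb hab => ?_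
  have hcombo : f (a • x + b • y) = a * f x + b * f y := by
    rw [hf.map_add, hf.map_smul, hf.map_smul, smul_eq_mul, smul_eq_mul]
  have hM : a * M + b * M = M := by rw [← add_mul, hab, one_mul]
  rcases hx with hx | hx
  · refine Or.inl (show f _ < M from ?_)
    rw [hcombo, ← hM]
    exact add_lt_add_of_lt_of_le (mul_lt_mul_of_pos_left hx ha)
      (mul_le_mul_of_nonneg_left (hle y hy) hb.le)
  rcases hy with hy | hy
  · refine Or.inl (show f _ < M from ?_)
    rw [hcombo, ← hM]
    exact add_lt_add_of_le_of_lt (mul_le_mul_of_nonneg_left (hface hx).le ha.le)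
      (mul_lt_mul_of_pos_left hy hb)
  · exact Or.inr (convex_convexHull 𝕜 _ hx hy ha.le hb.le hab)

lemma mem_convexHull_sep_eq_of_le (hf : IsLinearMap 𝕜 f) {s : Set E} {M : 𝕜}
    (hs : ∀ x ∈ s, f x ≤ M) {u : E} (hu : u ∈ convexHull 𝕜 s) (hMu : M ≤ f u) :
    u ∈ convexHull 𝕜 {x ∈ s | f x = M} := by
  have hsub : s ⊆ {x | f x < M} ∪ convexHull 𝕜 {x ∈ s | f x = M} := fun x hx =>
    (hs x hx).lt_or_eq.imp id fun h => subset_convexHull 𝕜 _ ⟨hx, h⟩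
  rcases convexHull_min hsub (convex_setOf_lt_union_convexHull hf s M) hu with h | h
  exacts [absurd hMu (not_le.2 h), h]

end Face

section InnerProduct

variable {E ι : Type*} [NormedAddCommGroup E] [InnerProductSpace ℝ E]

lemma isLinearMap_inner_left (p : E) : IsLinearMap ℝ fun x : E => ⟪x, p⟫ :=
  ⟨fun x y => inner_add_left x y p, fun c x => real_inner_smul_left x p c⟩

lemma inner_le_of_mem_convexHull {s : Set E} {p : E} {c : ℝ} (hs : ∀ x ∈ s, ⟪x, p⟫ ≤ c)
    {w : E} (hw : w ∈ convexHull ℝ s) : ⟪w, p⟫ ≤ c :=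
  convexHull_min hs (convex_halfSpace_le (isLinearMap_inner_left p) c) hw

lemma inner_eq_of_mem_convexHull {s : Set E} {p : E} {c : ℝ} (hs : ∀ x ∈ s, ⟪x, p⟫ = c)
    {w : E} (hw : w ∈ convexHull ℝ s) : ⟪w, p⟫ = c :=
  convexHull_min hs (convex_hyperplane (isLinearMap_inner_left p) c) hw

/-- For `v j = ∇g_j(x̄)` and `A = J(x̄)` this is `D(x̄)`. -/
def consistentSubsets (v : ι → E) (A : Set ι) : Set (Set ι) :=
  {D | D ⊆ A ∧ ∃ d : E, (∀ j ∈ D, ⟪v j, d⟫ = 1) ∧ ∀ j ∈ A \ D, ⟪v j, d⟫ < 1}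

def argmaxInnerConvexHull (v : ι → E) (A : Set ι) (p : E) : Set E :=
  {u ∈ convexHull ℝ (v '' A) | ∀ w ∈ convexHull ℝ (v '' A), ⟪w, p⟫ ≤ ⟪u, p⟫}

variable {v : ι → E} {A D : Set ι}

lemma exists_unit_mem_argmaxInnerConvexHull_of_mem_consistentSubsets
    (hD : D ∈ consistentSubsets v A) {u : E} (hu : u ∈ convexHull ℝ (v '' D)) :
    ∃ p : E, (‖p‖ = 1 ∧ ∃ j ∈ A, 0 < ⟪v j, p⟫) ∧ u ∈ argmaxInnerConvexHull v A p := by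
  obtain ⟨hDA, d, hd_eq, hd_lt⟩ := hD
  obtain ⟨j₀, hj₀⟩ : D.Nonempty := by
    by_contra h
    rw [not_nonempty_iff_eq_empty.1 h, image_empty, convexHull_empty] at hu
    exact hu
  have hd0 : d ≠ 0 := by
    rintro rfl
    simpa using hd_eq j₀ hj₀
  have hc : 0 < ‖d‖⁻¹ := inv_pos.2 (norm_pos_iff.2 hd0)
  have hud : ⟪u, d⟫ = 1 := inner_eq_of_mem_convexHull (by simpa using hd_eq) hu
  have hwd : ∀ w ∈ convexHull ℝ (v '' A), ⟪w, d⟫ ≤ 1 := fun w hw =>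
    inner_le_of_mem_convexHull (forall_mem_image.2 fun j hj =>
      (em (j ∈ D)).elim (fun hjD => (hd_eq j hjD).le) fun hjD => (hd_lt j ⟨hj, hjD⟩).le) hw
  refine ⟨‖d‖⁻¹ • d, ⟨norm_smul_inv_norm hd0, j₀, hDA hj₀, ?_⟩,
    convexHull_mono (image_mono hDA) hu, fun w hw => ?_⟩
  · rw [real_inner_smul_right, hd_eq j₀ hj₀, mul_one]
    exact hc
  · rw [real_inner_smul_right, real_inner_smul_right, hud]
    exact mul_le_mul_of_nonneg_left (hwd w hw) hc.le

/-- Witnesses: `D = {j ∈ A | ⟪v j, p⟫ = M}` and `d = M⁻¹ • p`, where `M = ⟪u, p⟫ > 0`. -/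
lemma exists_mem_consistentSubsets_of_mem_argmaxInnerConvexHull {p : E}
    (hpos : ∃ j ∈ A, 0 < ⟪v j, p⟫) {u : E} (hu : u ∈ argmaxInnerConvexHull v A p) :
    ∃ D ∈ consistentSubsets v A, u ∈ convexHull ℝ (v '' D) := by
  obtain ⟨huA, hmax⟩ := hu
  obtain ⟨j₁, hj₁, hj₁pos⟩ := hpos
  set M := ⟪u, p⟫
  have hle : ∀ j ∈ A, ⟪v j, p⟫ ≤ M := fun j hj =>
    hmax (v j) (subset_convexHull ℝ _ (mem_image_of_mem v hj))
  have hM : 0 < M := hj₁pos.trans_le (hle j₁ hj₁)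
  refine ⟨{j ∈ A | ⟪v j, p⟫ = M}, ⟨fun j hj => hj.1, M⁻¹ • p, ?_, ?_⟩, ?_⟩
  · rintro j ⟨-, hj⟩
    rw [real_inner_smul_right, hj, inv_mul_cancel₀ hM.ne']
  · rintro j ⟨hjA, hjD⟩
    rw [real_inner_smul_right, ← inv_mul_cancel₀ hM.ne']
    exact mul_lt_mul_of_pos_left ((hle j hjA).lt_of_ne fun h => hjD ⟨hjA, h⟩) (inv_pos.2 hM)
  · refine convexHull_mono ?_ (mem_convexHull_sep_eq_of_le (isLinearMap_inner_left p)
      (forall_mem_image.2 hle) huA le_rfl)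
    rintro _ ⟨⟨j, hj, rfl⟩, hjM⟩
    exact ⟨j, ⟨hj, hjM⟩, rfl⟩

theorem iUnion_convexHull_consistentSubsets_eq_iUnion_argmax (v : ι → E) (A : Set ι) :
    ⋃ D ∈ consistentSubsets v A, convexHull ℝ (v '' D) =
      ⋃ p ∈ {p : E | ‖p‖ = 1 ∧ ∃ j ∈ A, 0 < ⟪v j, p⟫}, argmaxInnerConvexHull v A p := by
  ext u
  simp only [mem_iUnion, exists_prop]
  constructor
  · rintro ⟨D, hD, hu⟩
    exact exists_unit_mem_argmaxInnerConvexHull_of_mem_consistentSubsets hD hu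
  · rintro ⟨p, ⟨-, hpos⟩, hu⟩
    exact exists_mem_consistentSubsets_of_mem_argmaxInnerConvexHull hpos hu

end InnerProduct

theorem union_convexHull_eq_union_argmax_general {n : ℕ} {ι : Type*}
    (gj : ι → En n → ℝ)
    (g : En n → ℝ)
    (xb : En n) :
    (⋃ D ∈ {D : Set ι | D ⊆ {j : ι | gj j xb = g xb} ∧
        ∃ dvec : En n, (∀ j ∈ D, ⟪gradient (gj j) xb, dvec⟫ = 1) ∧
          ∀ j ∈ {j : ι | gj j xb = g xb} \ D, ⟪gradient (gj j) xb, dvec⟫ < 1},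
      convexHull ℝ ((fun j => gradient (gj j) xb) '' D))
    =
    ⋃ p ∈ {p : En n | ‖p‖ = 1 ∧ ∃ j : ι, gj j xb = g xb ∧ 0 < ⟪gradient (gj j) xb, p⟫},
      {v ∈ convexHull ℝ ((fun j => gradient (gj j) xb) '' {j : ι | gj j xb = g xb}) |
        ∀ w ∈ convexHull ℝ ((fun j => gradient (gj j) xb) '' {j : ι | gj j xb = g xb}),
          ⟪w, p⟫ ≤ ⟪v, p⟫} :=
  iUnion_convexHull_consistentSubsets_eq_iUnion_argmax (fun j => gradient (gj j) xb)
    {j | gj j xb = g xb}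

/-- description of the union of support faces of `∂g(xb)` exposed by
directions with positive directional derivative via consistent index subsets `D(xb)`. -/
theorem union_convexHull_eq_union_argmax {n : ℕ} {ι : Type*} [Fintype ι]
    (X : Set (En n)) (hX : IsOpen X)
    (gj : ι → En n → ℝ) (hC1 : ∀ j, ContDiffOn ℝ 1 (gj j) X)
    (g : En n → ℝ)
    (hg : ∀ x : En n, IsGreatest (Set.range fun j => gj j x) (g x))
    (xb : En n) (hxb : xb ∈ X) :
    (⋃ D ∈ {D : Set ι | D ⊆ {j : ι | gj j xb = g xb} ∧
        ∃ dvec : En n, (∀ j ∈ D, ⟪gradient (gj j) xb, dvec⟫ = 1) ∧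
          ∀ j ∈ {j : ι | gj j xb = g xb} \ D, ⟪gradient (gj j) xb, dvec⟫ < 1},
      convexHull ℝ ((fun j => gradient (gj j) xb) '' D))
    =
    ⋃ p ∈ {p : En n | ‖p‖ = 1 ∧ ∃ j : ι, gj j xb = g xb ∧ 0 < ⟪gradient (gj j) xb, p⟫},
      {v ∈ convexHull ℝ ((fun j => gradient (gj j) xb) '' {j : ι | gj j xb = g xb}) |
        ∀ w ∈ convexHull ℝ ((fun j => gradient (gj j) xb) '' {j : ι | gj j xb = g xb}),
          ⟪w, p⟫ ≤ ⟪v, p⟫} :=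
  union_convexHull_eq_union_argmax_general gj g xb
end
end

section
/- Let g(x) = max_{j∈J} g_j(x) with J finite and g_j ∈ C¹(X). Then ⋃_{p∈S, g'(x̄;p)>0} Argmax_{v∈∂g(x̄)} ⟨v,p⟩ ⊆ Limsup_{x→x̄, g(x)>g(x̄)} ∂g(x), where ∂g(x) = conv{∇g_j(x) : j ∈ J(x)} is the Fréchet subdifferential and Limsup is the outer limit. -/
open Filter Topology Set Metric
open scoped RealInnerProductSpace

noncomputable section

/-! Let `v ∈ ∂g(x̄)` maximize `⟪·, p⟫` over `∂g(x̄)`, with `c = ⟪v, p⟫ > 0`. Every active gradient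
lies in `∂g(x̄)`, so the slope of `g` from `x̄` along `p` is at most `c`. For small `t > 0` put
`x_t = x̄ + t p` and minimize `y ↦ g y - ⟪v, y⟫ + ‖y - x_t‖² / t` over a small closed ball.
Comparing the minimizer `y` with `x_t` through the subgradient inequality at `x̄` forces
`‖y - x_t‖ = o(t)`. Hence `g y - g x̄ ≥ t c - o(t) > 0`, the minimizer is interior, and the first
order condition gives `v - 2 (y - x_t) / t ∈ ∂g(y)`, which is `o(1)`-close to `v`. -/

section FrechetSubdifferential

variable {n : ℕ} {f h : En n → ℝ} {v w x z : En n}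

lemma mem_fSubdiff_of_isLocalMin_sub_s14 (hh : HasGradientAt h w x)
    (hmin : IsLocalMin (fun y => f y - h y) x) : w ∈ FSubdiff f x := by
  intro ε hε
  filter_upwards [(hasGradientAt_iff_isLittleO.mp hh).def hε, hmin] with y hy hy'
  rw [Real.norm_eq_abs] at hy
  linarith [neg_abs_le (h y - h x - ⟪w, y - x⟫)]

lemma gradient_mem_fSubdiff_of_le (hle : ∀ y, h y ≤ f y) (heq : h x = f x)
    (hd : DifferentiableAt ℝ h x) : gradient h x ∈ FSubdiff f x :=
  mem_fSubdiff_of_isLocalMin_sub_s14 hd.hasGradientAt <|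
    IsMinOn.isLocalMin (fun y _ => by simpa [heq] using hle y) univ_mem

lemma hasGradientAt_inner_sub_mul_norm_sub_sq (t : ℝ) :
    HasGradientAt (fun y => ⟪v, y⟫ - t⁻¹ * ‖y - z‖ ^ 2) (v - (2 * t⁻¹) • (x - z)) x := by
  rw [hasGradientAt_iff_hasFDerivAt]
  refine ((innerSL ℝ v).hasFDerivAt.sub
    ((((hasFDerivAt_id x).sub_const z).norm_sq).const_mul t⁻¹)).congr_fderiv ?_
  ext u
  simp only [map_sub, ContinuousLinearMap.comp_id, sub_apply, coe_innerSL_apply,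
    smul_apply, map_smul, smul_eq_mul, nsmul_eq_mul, Nat.cast_ofNat, id_eq,
    InnerProductSpace.toDual_apply_apply]
  ring

lemma sub_smul_mem_fSubdiff_of_isLocalMin {t : ℝ}
    (hmin : IsLocalMin (fun y => f y - ⟪v, y⟫ + t⁻¹ * ‖y - z‖ ^ 2) x) :
    v - (2 * t⁻¹) • (x - z) ∈ FSubdiff f x :=
  mem_fSubdiff_of_isLocalMin_sub_s14 (hasGradientAt_inner_sub_mul_norm_sub_sq t) <| by
    convert hmin using 2 with y
    ring

end FrechetSubdifferential

section RayBound

variable {n : ℕ} {x p : En n} {c : ℝ}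

lemma eventually_le_add_mul_of_inner_gradient_lt {f : En n → ℝ} (hd : DifferentiableAt ℝ f x)
    (hc : ⟪gradient f x, p⟫ < c) : ∀ᶠ t in 𝓝[>] (0 : ℝ), f (x + t • p) ≤ f x + t * c := by
  have hslope := (hd.hasFDerivAt.hasLineDerivAt p).tendsto_slope_zero_right
  rw [hd.hasGradientAt.fderiv_apply] at hslope
  filter_upwards [hslope.eventually (gt_mem_nhds hc), self_mem_nhdsWithin] with t ht ht0
  rw [smul_eq_mul, inv_mul_lt_iff₀ ht0] at ht
  linarith

lemma eventually_le_add_mul_of_isGreatest {ι : Type*} [Finite ι] {gj : ι → En n → ℝ}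
    {g : En n → ℝ} (hg : ∀ x, IsGreatest (range fun j => gj j x) (g x))
    (hd : ∀ j, DifferentiableAt ℝ (gj j) x) (hc0 : 0 ≤ c)
    (hc : ∀ j, gj j x = g x → ⟪gradient (gj j) x, p⟫ ≤ c) {c' : ℝ} (hc' : c < c') :
    ∀ᶠ t in 𝓝[>] (0 : ℝ), g (x + t • p) ≤ g x + t * c' := by
  have hj : ∀ j, ∀ᶠ t in 𝓝[>] (0 : ℝ), gj j (x + t • p) ≤ g x + t * c' := by
    intro j
    rcases ((hg x).2 ⟨j, rfl⟩).eq_or_lt with hact | hinact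
    · rw [← hact]
      exact eventually_le_add_mul_of_inner_gradient_lt (hd j) ((hc j hact).trans_lt hc')
    · have hray : Tendsto (fun t : ℝ => x + t • p) (𝓝[>] 0) (𝓝 x) := by
        refine Tendsto.mono_left ?_ nhdsWithin_le_nhds
        exact (continuous_const.add (continuous_id.smul continuous_const)).tendsto' 0 x (by simp)
      filter_upwards [((hd j).continuousAt.tendsto.comp hray).eventually_lt_const hinact,
        self_mem_nhdsWithin] with t ht ht0
      nlinarith [show (0 : ℝ) < t from ht0, show gj j (x + t • p) < g x from ht]
  filter_upwards [eventually_all.mpr hj] with t ht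
  obtain ⟨j, hj⟩ := (hg (x + t • p)).1
  exact hj ▸ ht j

end RayBound

lemma continuousAt_of_isGreatest_range {α ι : Type*} [TopologicalSpace α] [Fintype ι]
    {gj : ι → α → ℝ} {g : α → ℝ} (hg : ∀ x, IsGreatest (range fun j => gj j x) (g x)) {x : α}
    (hc : ∀ j, ContinuousAt (gj j) x) : ContinuousAt g x := by
  obtain ⟨j₀, -⟩ := (hg x).1
  have hne : (Finset.univ : Finset ι).Nonempty := ⟨j₀, Finset.mem_univ _⟩
  have hsup : g = fun y => Finset.univ.sup' hne fun j => gj j y := by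
    funext y
    obtain ⟨j, hj⟩ := (hg y).1
    refine le_antisymm (hj ▸ Finset.le_sup' (fun j => gj j y) (Finset.mem_univ j)) ?_
    exact Finset.sup'_le _ _ fun j _ => (hg y).2 ⟨j, rfl⟩
  rw [hsup]
  exact ContinuousAt.finset_sup'_apply hne fun j _ => hc j

section Proximal

variable {n : ℕ} {f : En n → ℝ} {v x p y : En n} {t η : ℝ}

lemma norm_sub_le_norm_sub_add_smul_add (hp : ‖p‖ = 1) (ht : 0 ≤ t) :
    ‖y - x‖ ≤ ‖y - (x + t • p)‖ + t :=
  calc ‖y - x‖ = ‖(y - (x + t • p)) + t • p‖ := by congr 1; abel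
    _ ≤ ‖y - (x + t • p)‖ + ‖t • p‖ := norm_add_le _ _
    _ = ‖y - (x + t • p)‖ + t := by rw [norm_smul, hp, Real.norm_of_nonneg ht, mul_one]

lemma inner_sub_eq_inner_sub_add_smul_add (t : ℝ) :
    ⟪v, y - x⟫ = ⟪v, y - (x + t • p)⟫ + t * ⟪v, p⟫ := by
  rw [← real_inner_smul_right, ← inner_add_right, sub_add_eq_sub_sub, sub_add_cancel]

lemma norm_sub_le_of_proximal_ineq (hp : ‖p‖ = 1) (ht : 0 < t) (hη0 : 0 ≤ η) (hη1 : η ≤ 1)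
    (hsub : f x + ⟪v, y - x⟫ - η ^ 2 * ‖y - x‖ ≤ f y)
    (hray : f (x + t • p) ≤ f x + t * (⟪v, p⟫ + η ^ 2))
    (hmin : f y - ⟪v, y⟫ + t⁻¹ * ‖y - (x + t • p)‖ ^ 2 ≤ f (x + t • p) - ⟪v, x + t • p⟫) :
    ‖y - (x + t • p)‖ ≤ 3 * η * t := by
  set s := ‖y - (x + t • p)‖
  have htri := mul_le_mul_of_nonneg_left
    (norm_sub_le_norm_sub_add_smul_add (x := x) (y := y) hp ht.le) (sq_nonneg η)
  have hinner : ⟪v, x + t • p⟫ = ⟪v, x⟫ + t * ⟪v, p⟫ := by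
    rw [inner_add_right, real_inner_smul_right]
  have hquad : t⁻¹ * s ^ 2 ≤ η ^ 2 * (2 * t + s) := by
    rw [inner_sub_right] at hsub
    nlinarith
  rw [inv_mul_le_iff₀ ht] at hquad
  have hηt : 0 ≤ η * t := mul_nonneg hη0 ht.le
  have hηsq : η ^ 2 * t * s ≤ η * t * s := by
    have : η ^ 2 ≤ η := by nlinarith
    exact mul_le_mul_of_nonneg_right (mul_le_mul_of_nonneg_right this ht.le) (norm_nonneg _)
  by_contra! hlt
  -- `s ^ 2 ≤ 2 (η t) ^ 2 + (η t) s` and `s > 3 η t` contradict `(s - 2 η t) (s + η t) > 0`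
  nlinarith [mul_pos (by linarith : 0 < s - 2 * (η * t)) (by linarith : 0 < s + η * t)]

lemma add_mul_le_of_approx_subgradient (hp : ‖p‖ = 1) (ht : 0 ≤ t) (hη0 : 0 ≤ η) (hη1 : η ≤ 1)
    (hsub : f x + ⟪v, y - x⟫ - η ^ 2 * ‖y - x‖ ≤ f y) (hs : ‖y - (x + t • p)‖ ≤ 3 * η * t) :
    f x + t * (⟪v, p⟫ - (3 * ‖v‖ + 4) * η) ≤ f y := by
  have htri := norm_sub_le_norm_sub_add_smul_add (x := x) (y := y) hp ht
  have hcs : -(‖v‖ * ‖y - (x + t • p)‖) ≤ ⟪v, y - (x + t • p)⟫ :=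
    neg_le_of_abs_le (abs_real_inner_le_norm _ _)
  rw [inner_sub_eq_inner_sub_add_smul_add t] at hsub
  nlinarith [mul_le_mul_of_nonneg_left hs (norm_nonneg v), mul_nonneg hη0 ht,
    mul_nonneg (mul_nonneg hη0 hη0) ht]

end Proximal

lemma eventually_mul_lt_nhdsGT_zero (a : ℝ) {b : ℝ} (hb : 0 < b) :
    ∀ᶠ t in 𝓝[>] (0 : ℝ), a * t < b :=
  nhdsWithin_le_nhds <| (continuous_const.mul continuous_id).continuousAt.eventually_lt
    continuousAt_const (by simpa using hb)

section OuterLimit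

variable {n : ℕ} {f : En n → ℝ} {xb v p : En n}

lemma mem_outerLim_of_forall_exists
    (h : ∀ δ > 0, ∃ x w, dist x xb < δ ∧ f xb < f x ∧ w ∈ FSubdiff f x ∧ dist w v < δ) :
    v ∈ OuterLim f xb := by
  choose xk wk hx hf hw hv using fun k : ℕ => h (1 / (k + 1)) Nat.one_div_pos_of_nat
  have hlim : ∀ (u : ℕ → En n) (y : En n), (∀ k, dist (u k) y < 1 / (k + 1)) →
      Tendsto u atTop (𝓝 y) := fun u y hu =>
    tendsto_iff_dist_tendsto_zero.mpr <| squeeze_zero (fun _ => dist_nonneg)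
      (fun k => (hu k).le) tendsto_one_div_add_atTop_nhds_zero_nat
  exact ⟨xk, wk, hlim _ _ hx, hf, hw, hlim _ _ hv⟩

lemma exists_near_mem_fSubdiff (hv : v ∈ FSubdiff f xb)
    (hcont : ∀ᶠ y in 𝓝 xb, ContinuousAt f y) (hp : ‖p‖ = 1) (hc : 0 < ⟪v, p⟫)
    (hray : ∀ c > ⟪v, p⟫, ∀ᶠ t in 𝓝[>] (0 : ℝ), f (xb + t • p) ≤ f xb + t * c)
    {δ : ℝ} (hδ : 0 < δ) :
    ∃ x w, dist x xb < δ ∧ f xb < f x ∧ w ∈ FSubdiff f x ∧ dist w v < δ := by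
  have hpos : ∀ᶠ t in 𝓝[>] (0 : ℝ), 0 < t := self_mem_nhdsWithin
  obtain ⟨η, hη0, hη1, hηδ, hηc⟩ := (hpos.and <|
    (eventually_mul_lt_nhdsGT_zero 1 one_pos).and <| (eventually_mul_lt_nhdsGT_zero 6 hδ).and <|
      eventually_mul_lt_nhdsGT_zero (3 * ‖v‖ + 4) hc).exists
  rw [one_mul] at hη1
  obtain ⟨r, hr, hball⟩ :=
    Metric.eventually_nhds_iff_ball.mp ((hv (η ^ 2) (by positivity)).and hcont)
  obtain ⟨t, hft, ht0, htr, htδ⟩ := ((hray _ (lt_add_of_pos_right _ (pow_pos hη0 2))).and <|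
    hpos.and <| (eventually_mul_lt_nhdsGT_zero 8 hr).and <|
      eventually_mul_lt_nhdsGT_zero 4 hδ).exists
  set xt := xb + t • p
  have hK : closedBall xb (r / 2) ⊆ ball xb r := closedBall_subset_ball (by linarith)
  obtain ⟨y, hyK, hmin⟩ := (isCompact_closedBall xb (r / 2)).exists_isMinOn
    (nonempty_closedBall.mpr (by positivity))
    (f := fun y => f y - ⟪v, y⟫ + t⁻¹ * ‖y - xt‖ ^ 2) <| fun y hy =>
      have := (hball y (hK hy)).2
      ContinuousAt.continuousWithinAt (by fun_prop)
  have hsub y (hy : y ∈ closedBall xb (r / 2)) :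
      f xb + ⟪v, y - xb⟫ - η ^ 2 * ‖y - xb‖ ≤ f y := by
    have := (hball y (hK hy)).1
    linarith
  have hxt : xt ∈ closedBall xb (r / 2) := by
    rw [mem_closedBall, dist_eq_norm, add_sub_cancel_left, norm_smul, hp,
      Real.norm_of_nonneg ht0.le]
    linarith
  have hs : ‖y - xt‖ ≤ 3 * η * t :=
    norm_sub_le_of_proximal_ineq hp ht0 hη0.le hη1.le (hsub y hyK) hft (by simpa using hmin hxt)
  have hyxb : dist y xb ≤ 4 * t := by
    rw [dist_eq_norm]
    nlinarith [norm_sub_le_norm_sub_add_smul_add (x := xb) (y := y) hp ht0.le]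
  refine ⟨y, v - (2 * t⁻¹) • (y - xt), by linarith, ?_, ?_, ?_⟩
  · have := add_mul_le_of_approx_subgradient hp ht0.le hη0.le hη1.le (hsub y hyK) hs
    nlinarith
  · refine sub_smul_mem_fSubdiff_of_isLocalMin (hmin.isLocalMin ?_)
    exact closedBall_mem_nhds_of_mem (by rw [mem_ball]; linarith)
  · rw [dist_eq_norm, sub_sub_cancel_left, norm_neg, norm_smul,
      Real.norm_of_nonneg (by positivity)]
    calc 2 * t⁻¹ * ‖y - xt‖ ≤ 2 * t⁻¹ * (3 * η * t) := by gcongr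
      _ = 6 * η := by field_simp; ring
      _ < δ := hηδ

end OuterLimit

/-- for a finite pointwise maximum of `C¹` functions, the union of the
support faces of `∂g(xb)` exposed by unit directions `p` with `g'(xb;p) > 0` is
contained in the outer limit of Fréchet subdifferentials along `x → xb`, `g x > g xb`. -/
theorem union_argmax_subset_outerLim_max {n : ℕ} {ι : Type*} [Fintype ι]
    (X : Set (En n)) (hX : IsOpen X)
    (gj : ι → En n → ℝ) (hC1 : ∀ j, ContDiffOn ℝ 1 (gj j) X)
    (g : En n → ℝ)
    (hg : ∀ x : En n, IsGreatest (Set.range fun j => gj j x) (g x))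
    (xb : En n) (hxb : xb ∈ X) :
    (⋃ p ∈ {p : En n | ‖p‖ = 1 ∧ ∃ j : ι, gj j xb = g xb ∧ 0 < ⟪gradient (gj j) xb, p⟫},
      {v ∈ FSubdiff g xb | ∀ w ∈ FSubdiff g xb, ⟪w, p⟫ ≤ ⟪v, p⟫})
    ⊆ OuterLim g xb := by
  intro v hv
  obtain ⟨p, ⟨hp, j₀, hj₀, hj₀p⟩, hvF, hvmax⟩ := mem_iUnion₂.mp hv
  have hdiff j x (hx : x ∈ X) : DifferentiableAt ℝ (gj j) x :=
    ((hC1 j).differentiableOn one_ne_zero).differentiableAt (hX.mem_nhds hx)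
  have hactive j (hj : gj j xb = g xb) : ⟪gradient (gj j) xb, p⟫ ≤ ⟪v, p⟫ :=
    hvmax _ (gradient_mem_fSubdiff_of_le (fun y => (hg y).2 ⟨j, rfl⟩) hj (hdiff j xb hxb))
  have hc : 0 < ⟪v, p⟫ := hj₀p.trans_le (hactive j₀ hj₀)
  refine mem_outerLim_of_forall_exists fun δ hδ => exists_near_mem_fSubdiff hvF ?_ hp hc ?_ hδ
  · filter_upwards [hX.mem_nhds hxb] with y hy
    exact continuousAt_of_isGreatest_range hg fun j => (hdiff j y hy).continuousAt
  · exact fun c' hc' => eventually_le_add_mul_of_isGreatest hg (fun j => hdiff j xb hxb)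
      hc.le hactive hc'
end
end

section
/- Let g(x) = max_{j∈J} g_j(x) with J finite and all g_j affine on ℝⁿ. Then equality holds: ⋃_{p∈S, g'(x̄;p)>0} Argmax_{v∈∂g(x̄)} ⟨v,p⟩ = Limsup_{x→x̄, g(x)>g(x̄)} ∂g(x). -/
open Filter Topology Set Metric
open scoped RealInnerProductSpace

noncomputable section

/-! Near `x`, an index active at `y` is already active at `x`, so locally
`g y = g x + ⟪a j, y - x⟫` for some `j ∈ J(x)`; for the convex function `g` the Fréchet
subdifferential is the convex one. Moving from `xb` along `p`, `g` therefore grows at rate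
`max_{j ∈ J(xb)} ⟪a j, p⟫ ≤ ⟪v, p⟫`, which keeps a maximiser `v` a subgradient at `xb + t • p`.
Conversely, some active set `K ⊆ J(xb)` occurs at infinitely many `xk k`. All `a j`, `j ∈ K`,
have the same inner product `g (xk k₀) - g xb` with `u = xk k₀ - xb`, which pins `⟪yk k, u⟫`
to that value along the subsequence; in the limit, `v` maximises `⟪·, u⟫` over `∂g(xb)`. -/

theorem tendsto_add_smul_nhdsGT {E : Type*} [TopologicalSpace E] [AddCommGroup E] [Module ℝ E]
    [ContinuousAdd E] [ContinuousSMul ℝ E] (x w : E) :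
    Tendsto (fun t : ℝ => x + t • w) (𝓝[>] 0) (𝓝 x) :=
  ((continuous_const.add (continuous_id.smul continuous_const)).tendsto' 0 x
    (by simp)).mono_left nhdsWithin_le_nhds

section Subdifferential

variable {n : ℕ} {f : En n → ℝ}

theorem ConvexOn.mem_fSubdiff_iff (hf : ConvexOn ℝ univ f) {x v : En n} :
    v ∈ FSubdiff f x ↔ ∀ z, f x + ⟪v, z - x⟫ ≤ f z := by
  refine ⟨fun hv z => ?_, fun hv ε hε => Eventually.of_forall fun y => ?_⟩
  · set w := z - x
    refine le_of_forall_pos_le_add fun ε hε => ?_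
    have hε' : 0 < ε / (‖w‖ + 1) := by positivity
    obtain ⟨t, hloc, ht0, ht1⟩ := (((tendsto_add_smul_nhdsGT x w).eventually (hv _ hε')).and
      (Ioo_mem_nhdsGT one_pos)).exists
    have hconv : f (x + t • w) ≤ (1 - t) * f x + t * f z := by
      have := hf.2 (mem_univ x) (mem_univ z) (sub_nonneg.2 ht1.le) ht0.le (sub_add_cancel 1 t)
      rwa [show (1 - t) • x + t • z = x + t • w by simp only [w, smul_sub, sub_smul, one_smul]; abel]
        at this
    rw [add_sub_cancel_left, real_inner_smul_right, norm_smul, Real.norm_of_nonneg ht0.le] at hloc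
    have hslope : ⟪v, w⟫ ≤ f z - f x + ε / (‖w‖ + 1) * ‖w‖ :=
      le_of_mul_le_mul_left (by nlinarith) ht0
    have hsmall : ε / (‖w‖ + 1) * ‖w‖ ≤ ε := by
      rw [div_mul_eq_mul_div, div_le_iff₀ (by positivity)]; nlinarith [norm_nonneg w]
    linarith
  · have := hv y
    nlinarith [norm_nonneg (y - x)]

theorem ConvexOn.outerLim_subset_fSubdiff (hf : ConvexOn ℝ univ f) (xb : En n) :
    OuterLim f xb ⊆ FSubdiff f xb := by
  rintro v ⟨xk, yk, hxk, hlt, hyk, hyv⟩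
  refine hf.mem_fSubdiff_iff.2 fun z => le_of_tendsto'
    (tendsto_const_nhds.add (hyv.inner (tendsto_const_nhds.sub hxk))) fun k => ?_
  linarith [hlt k, hf.mem_fSubdiff_iff.1 (hyk k) z]

theorem mem_outerLim_of_frequently {xb y : En n}
    (h : ∃ᶠ x in 𝓝 xb, f xb < f x ∧ y ∈ FSubdiff f x) : y ∈ OuterLim f xb := by
  obtain ⟨xk, hxk, hk⟩ := exists_seq_forall_of_frequently h
  exact ⟨xk, fun _ => y, hxk, fun k => (hk k).1, fun k => (hk k).2, tendsto_const_nhds⟩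

end Subdifferential

section MaxAffine

variable {n : ℕ} {ι : Type*} {a : ι → En n} {b : ι → ℝ} {g : En n → ℝ} {x xb v : En n}

/-- The active index set `J(x)`. -/
def activeSet (a : ι → En n) (b : ι → ℝ) (g : En n → ℝ) (x : En n) : Set ι :=
  {j | ⟪a j, x⟫ + b j = g x}

theorem inner_add_eq_of_mem_activeSet {j : ι} (hj : j ∈ activeSet a b g x) (y : En n) :
    ⟪a j, y⟫ + b j = g x + ⟪a j, y - x⟫ := by
  have hj' : ⟪a j, x⟫ + b j = g x := hj
  rw [inner_sub_right]
  linarith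

def IsMaxAffine (a : ι → En n) (b : ι → ℝ) (g : En n → ℝ) : Prop :=
  ∀ x : En n, IsGreatest (Set.range fun j => ⟪a j, x⟫ + b j) (g x)

theorem IsMaxAffine.convexOn (hg : IsMaxAffine a b g) : ConvexOn ℝ univ g := by
  refine ⟨convex_univ, fun x _ y _ s t hs ht hst => ?_⟩
  obtain ⟨j, hj : ⟪a j, s • x + t • y⟫ + b j = g (s • x + t • y)⟩ := (hg _).1
  have hx : ⟪a j, x⟫ + b j ≤ g x := (hg x).2 ⟨j, rfl⟩
  have hy : ⟪a j, y⟫ + b j ≤ g y := (hg y).2 ⟨j, rfl⟩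
  calc g (s • x + t • y) = s * (⟪a j, x⟫ + b j) + t * (⟪a j, y⟫ + b j) := by
        rw [← hj, inner_add_right, real_inner_smul_right, real_inner_smul_right]
        linear_combination -(b j) * hst
    _ ≤ s • g x + t • g y := by simp only [smul_eq_mul]; gcongr

theorem IsMaxAffine.mem_fSubdiff_of_mem_activeSet (hg : IsMaxAffine a b g) {j : ι}
    (hj : j ∈ activeSet a b g x) : a j ∈ FSubdiff g x :=
  hg.convexOn.mem_fSubdiff_iff.2 fun z => inner_add_eq_of_mem_activeSet hj z ▸ (hg z).2 ⟨j, rfl⟩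

variable [Finite ι]

theorem IsMaxAffine.eventually_activeSet_subset (hg : IsMaxAffine a b g) (x : En n) :
    ∀ᶠ y in 𝓝 x, activeSet a b g y ⊆ activeSet a b g x := by
  obtain ⟨i, hi : ⟪a i, x⟫ + b i = g x⟩ := (hg x).1
  have hpiece : ∀ᶠ y in 𝓝 x, ∀ j, j ∈ activeSet a b g x ∨ ⟪a j, y⟫ + b j < ⟪a i, y⟫ + b i := by
    refine eventually_all.2 fun j => ?_
    by_cases hj : j ∈ activeSet a b g x
    · exact Eventually.of_forall fun _ => Or.inl hj
    · have hlt : ⟪a j, x⟫ + b j < ⟪a i, x⟫ + b i := hi ▸ lt_of_le_of_ne ((hg x).2 ⟨j, rfl⟩) hj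
      exact (ContinuousAt.eventually_lt (by fun_prop) (by fun_prop) hlt).mono fun _ => Or.inr
  filter_upwards [hpiece] with y hy j (hjy : ⟪a j, y⟫ + b j = g y)
  have hiy : ⟪a i, y⟫ + b i ≤ g y := (hg y).2 ⟨i, rfl⟩
  exact (hy j).resolve_right (by linarith)

theorem IsMaxAffine.eventually_eq_add_inner (hg : IsMaxAffine a b g) (x : En n) :
    ∀ᶠ y in 𝓝 x, ∃ j ∈ activeSet a b g x, g y = g x + ⟪a j, y - x⟫ := by
  filter_upwards [hg.eventually_activeSet_subset x] with y hy
  obtain ⟨j, hj : ⟪a j, y⟫ + b j = g y⟩ := (hg y).1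
  exact ⟨j, hy hj, by rw [← hj, inner_add_eq_of_mem_activeSet (hy hj)]⟩

theorem IsMaxAffine.exists_mem_activeSet_inner_le (hg : IsMaxAffine a b g)
    (hv : v ∈ FSubdiff g x) (w : En n) : ∃ j ∈ activeSet a b g x, ⟪v, w⟫ ≤ ⟪a j, w⟫ := by
  obtain ⟨t, ⟨j, hj, heq⟩, ht : 0 < t⟩ := (((tendsto_add_smul_nhdsGT x w).eventually
    (hg.eventually_eq_add_inner x)).and self_mem_nhdsWithin).exists
  refine ⟨j, hj, le_of_mul_le_mul_left ?_ ht⟩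
  have := hg.convexOn.mem_fSubdiff_iff.1 hv (x + t • w)
  rw [heq, add_sub_cancel_left, real_inner_smul_right, real_inner_smul_right] at this
  linarith

theorem IsMaxAffine.inner_eq_of_mem_fSubdiff (hg : IsMaxAffine a b g) (hv : v ∈ FSubdiff g x)
    {u : En n} {d : ℝ} (h : ∀ j ∈ activeSet a b g x, ⟪a j, u⟫ = d) : ⟪v, u⟫ = d := by
  obtain ⟨i, hi, hle⟩ := hg.exists_mem_activeSet_inner_le hv u
  obtain ⟨j, hj, hge⟩ := hg.exists_mem_activeSet_inner_le hv (-u)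
  rw [inner_neg_right, inner_neg_right, h j hj] at hge
  linarith [h i hi]

theorem IsMaxAffine.mem_outerLim_of_forall_inner_le (hg : IsMaxAffine a b g) {p : En n}
    (hv : v ∈ FSubdiff g xb) (hmax : ∀ w ∈ FSubdiff g xb, ⟪w, p⟫ ≤ ⟪v, p⟫) (hpos : 0 < ⟪v, p⟫) :
    v ∈ OuterLim g xb := by
  have hv' := hg.convexOn.mem_fSubdiff_iff.1 hv
  refine mem_outerLim_of_frequently <| (tendsto_add_smul_nhdsGT xb p).frequently <|
    Eventually.frequently ?_
  filter_upwards [(tendsto_add_smul_nhdsGT xb p).eventually (hg.eventually_eq_add_inner xb),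
    self_mem_nhdsWithin] with t ⟨j, hj, heq⟩ (ht : 0 < t)
  rw [add_sub_cancel_left, real_inner_smul_right] at heq
  have hjp := mul_le_mul_of_nonneg_left (hmax _ (hg.mem_fSubdiff_of_mem_activeSet hj)) ht.le
  have hgrow := hv' (xb + t • p)
  rw [add_sub_cancel_left, real_inner_smul_right] at hgrow
  refine ⟨by nlinarith [mul_pos ht hpos], hg.convexOn.mem_fSubdiff_iff.2 fun z => ?_⟩
  rw [heq, show z - (xb + t • p) = (z - xb) - t • p by abel, inner_sub_right,
    real_inner_smul_right]
  linarith [hv' z]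

theorem IsMaxAffine.exists_activeSet_frequently (hg : IsMaxAffine a b g) {xk : ℕ → En n}
    (hxk : Tendsto xk atTop (𝓝 xb)) : ∃ k₀, activeSet a b g (xk k₀) ⊆ activeSet a b g xb ∧
      ∃ᶠ k in atTop, activeSet a b g (xk k) = activeSet a b g (xk k₀) := by
  obtain ⟨K, hK⟩ := Finite.exists_infinite_fiber fun k => activeSet a b g (xk k)
  have hfreq : ∃ᶠ k in atTop, activeSet a b g (xk k) = K :=
    Nat.frequently_atTop_iff_infinite.2 (Set.infinite_coe_iff.1 hK)
  obtain ⟨k₀, hk₀, hsub⟩ :=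
    (hfreq.and_eventually (hxk.eventually (hg.eventually_activeSet_subset xb))).exists
  exact ⟨k₀, hsub, hk₀ ▸ hfreq⟩

theorem IsMaxAffine.exists_forall_inner_le_of_mem_outerLim (hg : IsMaxAffine a b g)
    (hv : v ∈ OuterLim g xb) : ∃ p : En n, (‖p‖ = 1 ∧ ∃ j ∈ activeSet a b g xb, 0 < ⟪a j, p⟫) ∧
      ∀ w ∈ FSubdiff g xb, ⟪w, p⟫ ≤ ⟪v, p⟫ := by
  obtain ⟨xk, yk, hxk, hlt, hyk, hyv⟩ := hv
  obtain ⟨k₀, hsub, hfreq⟩ := hg.exists_activeSet_frequently hxk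
  set u := xk k₀ - xb
  set d := g (xk k₀) - g xb
  have hK : ∀ j ∈ activeSet a b g (xk k₀), ⟪a j, u⟫ = d := fun j hj => by
    have hj' : ⟪a j, xk k₀⟫ + b j = g (xk k₀) := hj
    linarith [inner_add_eq_of_mem_activeSet (hsub hj) (xk k₀)]
  have hvu : ⟪v, u⟫ = d := tendsto_nhds_unique_of_frequently_eq (hyv.inner tendsto_const_nhds)
    tendsto_const_nhds (hfreq.mono fun k hk => hg.inner_eq_of_mem_fSubdiff (hyk k) (hk ▸ hK))
  have hu : 0 < ‖u‖ := norm_pos_iff.2 fun h => by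
    rw [h, inner_zero_right] at hvu
    linarith [hlt k₀]
  obtain ⟨j, hj : ⟪a j, xk k₀⟫ + b j = g (xk k₀)⟩ := (hg (xk k₀)).1
  refine ⟨‖u‖⁻¹ • u, ⟨?_, j, hsub hj, ?_⟩, fun w hw => ?_⟩
  · rw [norm_smul, norm_inv, norm_norm, inv_mul_cancel₀ hu.ne']
  · rw [real_inner_smul_right, hK j hj]
    exact mul_pos (inv_pos.2 hu) (sub_pos.2 (hlt k₀))
  · rw [real_inner_smul_right, real_inner_smul_right, hvu]
    gcongr
    linarith [hg.convexOn.mem_fSubdiff_iff.1 hw (xk k₀)]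

end MaxAffine

/-- for a finite pointwise maximum of affine functions, the union of the
support faces of `∂g(xb)` exposed by unit directions with positive directional
derivative equals the outer limit of subdifferentials along `x → xb`, `g x > g xb`. -/
theorem union_argmax_eq_outerLim_affine {n : ℕ} {ι : Type*} [Fintype ι]
    (a : ι → En n) (b : ι → ℝ) (g : En n → ℝ)
    (hg : ∀ x : En n, IsGreatest (Set.range fun j => ⟪a j, x⟫ + b j) (g x))
    (xb : En n) :
    (⋃ p ∈ {p : En n | ‖p‖ = 1 ∧ ∃ j : ι, ⟪a j, xb⟫ + b j = g xb ∧ 0 < ⟪a j, p⟫},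
      {v ∈ FSubdiff g xb | ∀ w ∈ FSubdiff g xb, ⟪w, p⟫ ≤ ⟪v, p⟫})
    = OuterLim g xb := by
  replace hg : IsMaxAffine a b g := hg
  ext v
  simp only [mem_iUnion, mem_ofPred_eq, exists_prop]
  constructor
  · rintro ⟨p, ⟨-, j, hj, hpos⟩, hv, hmax⟩
    exact hg.mem_outerLim_of_forall_inner_le hv hmax
      (hpos.trans_le (hmax _ (hg.mem_fSubdiff_of_mem_activeSet hj)))
  · intro hv
    obtain ⟨p, hp, hmax⟩ := hg.exists_forall_inner_le_of_mem_outerLim hv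
    exact ⟨p, hp, hg.convexOn.outerLim_subset_fSubdiff xb hv, hmax⟩
end
end

section
/- Let h(x) = min_{i∈I} h_i(x) with I finite, where each h_i(x) = max_{v∈C_i} ⟨v,x⟩ is the support function of a nonempty compact convex set C_i ⊆ ℝⁿ. Then cl( ⋃_{x∈S, h(x)>0} ⋂_{i∈I(x)} Argmax_{v∈C_i} ⟨v,x⟩ ) = Limsup_{x→0, h(x)>0} ∂h(x), where I(x) = { i : h_i(x) = h(x) }, S is the unit sphere, and ∂h is the Fréchet subdifferential. -/
open Filter Topology Set Metric
open scoped RealInnerProductSpace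

noncomputable section

section Aux
variable {n : ℕ} {ι : Type*} [Fintype ι]
  {C : ι → Set (En n)} {hi : ι → En n → ℝ} {h : En n → ℝ}

lemma le_hi (hhi : ∀ (i : ι) (x : En n), IsGreatest {r : ℝ | ∃ v ∈ C i, r = ⟪v, x⟫} (hi i x))
    {i : ι} {v : En n} (hv : v ∈ C i) (x : En n) : ⟪v, x⟫ ≤ hi i x :=
  (hhi i x).2 ⟨v, hv, rfl⟩

lemma hi_smul (hhi : ∀ (i : ι) (x : En n), IsGreatest {r : ℝ | ∃ v ∈ C i, r = ⟪v, x⟫} (hi i x))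
    (i : ι) {c : ℝ} (hc : 0 ≤ c) (x : En n) : hi i (c • x) = c * hi i x := by
  refine (hhi i (c • x)).unique ⟨?_, ?_⟩
  · obtain ⟨v, hv, e⟩ := (hhi i x).1
    exact ⟨v, hv, by rw [real_inner_smul_right, ← e]⟩
  · rintro r ⟨v, hv, rfl⟩
    rw [real_inner_smul_right]
    exact mul_le_mul_of_nonneg_left (le_hi hhi hv x) hc

lemma h_smul (hhi : ∀ (i : ι) (x : En n), IsGreatest {r : ℝ | ∃ v ∈ C i, r = ⟪v, x⟫} (hi i x))
    (hh : ∀ x : En n, IsLeast (Set.range fun i => hi i x) (h x))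
    {c : ℝ} (hc : 0 ≤ c) (x : En n) : h (c • x) = c * h x := by
  refine (hh (c • x)).unique ⟨?_, ?_⟩
  · obtain ⟨i, e⟩ := (hh x).1
    exact ⟨i, by simp only; rw [hi_smul hhi i hc]; simp only at e; rw [e]⟩
  · rintro r ⟨i, rfl⟩
    simp only
    rw [hi_smul hhi i hc]
    exact mul_le_mul_of_nonneg_left ((hh x).2 ⟨i, rfl⟩) hc


lemma key (hcomp : ∀ i, IsCompact (C i)) (hconv : ∀ i, Convex ℝ (C i))
    (hhi : ∀ (i : ι) (x : En n), IsGreatest {r : ℝ | ∃ v ∈ C i, r = ⟪v, x⟫} (hi i x))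
    (hh : ∀ x : En n, IsLeast (Set.range fun i => hi i x) (h x)) (x : En n) :
    FSubdiff h x = ⋂ i ∈ {i : ι | hi i x = h x}, {v ∈ C i | ⟪v, x⟫ = hi i x} := by
  have hle : ∀ (j : ι) (y : En n), h y ≤ hi j y := fun j y => (hh y).2 ⟨j, rfl⟩
  ext v
  simp only [Set.mem_iInter, Set.mem_setOf_eq, FSubdiff]
  constructor
  · intro hv i hix
    -- subgradient inequality for hi i
    have sub : ∀ y : En n, hi i x + ⟪v, y - x⟫ ≤ hi i y := by
      intro y
      have step : ∀ ε > (0:ℝ), -(ε * ‖y - x‖) ≤ hi i y - hi i x - ⟪v, y - x⟫ := by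
        intro ε hε
        obtain ⟨δ, hδ, hball⟩ := Metric.eventually_nhds_iff.1 (hv ε hε)
        have hnorm : (0:ℝ) ≤ ‖y - x‖ := norm_nonneg _
        set t : ℝ := min 1 (δ / (2 * (‖y - x‖ + 1))) with ht
        have ht0 : 0 < t := lt_min one_pos (by positivity)
        have ht1 : t ≤ 1 := min_le_left _ _
        set z := x + t • (y - x) with hz
        have hdz : dist z x < δ := by
          rw [dist_eq_norm]
          have : z - x = t • (y - x) := by rw [hz]; abel
          rw [this, norm_smul, Real.norm_eq_abs, abs_of_pos ht0]
          calc t * ‖y - x‖ ≤ (δ / (2 * (‖y - x‖ + 1))) * ‖y - x‖ :=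
                mul_le_mul_of_nonneg_right (min_le_right _ _) hnorm
            _ < δ := by
                rw [div_mul_eq_mul_div, div_lt_iff₀ (by positivity)]
                nlinarith
        have key1 := hball hdz
        have hzx : z - x = t • (y - x) := by rw [hz]; abel
        rw [hzx, real_inner_smul_right, norm_smul, Real.norm_eq_abs, abs_of_pos ht0] at key1
        -- key1 : h z - h x - t * ⟪v, y-x⟫ ≥ -ε * (t * ‖y - x‖)
        have hzc : hi i z ≤ (1 - t) * hi i x + t * hi i y := by
          obtain ⟨w, hw, e⟩ := (hhi i z).1
          have hze : ⟪w, z⟫ = (1 - t) * ⟪w, x⟫ + t * ⟪w, y⟫ := by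
            have : z = (1 - t) • x + t • y := by
              rw [hz]; module
            rw [this, inner_add_right, real_inner_smul_right, real_inner_smul_right]
          rw [e, hze]
          have h1 := le_hi hhi hw x
          have h2 := le_hi hhi hw y
          nlinarith [sub_nonneg.2 ht1]
        have hhz : h x + (t * ⟪v, y - x⟫ + -ε * (t * ‖y - x‖)) ≤ h z := by linarith
        have : hi i x + (t * ⟪v, y - x⟫ + -ε * (t * ‖y - x‖)) ≤ hi i z :=
          by rw [hix]; exact le_trans hhz (hle i z)
        nlinarith
      by_cases hyx : ‖y - x‖ = 0
      · have : y = x := by rwa [norm_sub_eq_zero_iff] at hyx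
        subst this; simp
      · have hpos : 0 < ‖y - x‖ := lt_of_le_of_ne (norm_nonneg _) (Ne.symm hyx)
        by_contra hc
        push_neg at hc
        set D := hi i y - hi i x - ⟪v, y - x⟫ with hD
        have hD0 : D < 0 := by rw [hD]; linarith
        have := step (-D / (2 * ‖y - x‖)) (div_pos (by linarith) (by positivity))
        have he : (-D / (2 * ‖y - x‖)) * ‖y - x‖ = -D / 2 := by
          field_simp
        rw [he] at this
        linarith
    have h0 : hi i 0 = 0 := by
      obtain ⟨w, hw, e⟩ := (hhi i 0).1
      simp [e]
    have g2 : hi i x ≤ ⟪v, x⟫ := by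
      have := sub 0
      rw [h0, zero_sub, inner_neg_right] at this
      linarith
    have g1 : ⟪v, x⟫ ≤ hi i x := by
      have h2 := sub ((2:ℝ) • x)
      have e2 : hi i ((2:ℝ) • x) = 2 * hi i x := hi_smul hhi i (by norm_num) x
      have : (2:ℝ) • x - x = x := by module
      rw [this, e2] at h2
      linarith
    have hvx : ⟪v, x⟫ = hi i x := le_antisymm g1 g2
    refine ⟨?_, hvx⟩
    by_contra hvn
    obtain ⟨f, s, hfs, hsf⟩ := geometric_hahn_banach_closed_point (hconv i) (hcomp i).isClosed hvn
    set w := (InnerProductSpace.toDual ℝ (En n)).symm f with hwdef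
    have hwf : ∀ a : En n, ⟪w, a⟫ = f a := fun a => InnerProductSpace.toDual_symm_apply
    obtain ⟨u, hu, hue⟩ := (hhi i w).1
    have h1 : hi i w < f v := by
      rw [hue, real_inner_comm, hwf]
      exact lt_trans (hfs u hu) hsf
    have h2 : f v ≤ hi i w := by
      have sgd := sub (x + w)
      have hxw : x + w - x = w := by abel
      rw [hxw] at sgd
      have sadd : hi i (x + w) ≤ hi i x + hi i w := by
        obtain ⟨u', hu', e'⟩ := (hhi i (x + w)).1
        rw [e', inner_add_right]
        exact add_le_add (le_hi hhi hu' x) (le_hi hhi hu' w)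
      have : ⟪v, w⟫ ≤ hi i w := by linarith
      rwa [real_inner_comm, hwf] at this
    linarith
  · intro hv ε hε
    obtain ⟨M, hM0, hM⟩ : ∃ M : ℝ, 0 ≤ M ∧ ∀ i, ∀ u ∈ C i, ‖u‖ ≤ M := by
      obtain ⟨M, hMb⟩ := (isCompact_iUnion hcomp).isBounded.subset_closedBall 0
      refine ⟨max M 0, le_max_right _ _, fun i u hu => ?_⟩
      have := hMb (Set.mem_iUnion.2 ⟨i, hu⟩)
      rw [Metric.mem_closedBall, dist_zero_right] at this
      exact this.trans (le_max_left _ _)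
    have lip : ∀ (j : ι) (y z : En n), hi j y ≤ hi j z + M * ‖y - z‖ := by
      intro j y z
      obtain ⟨u, hu, e⟩ := (hhi j y).1
      have : ⟪u, y⟫ = ⟪u, z⟫ + ⟪u, y - z⟫ := by
        rw [← inner_add_right]
        congr 1
        abel
      rw [e, this]
      refine add_le_add (le_hi hhi hu z) ?_
      calc ⟪u, y - z⟫ ≤ ‖u‖ * ‖y - z‖ := real_inner_le_norm _ _
        _ ≤ M * ‖y - z‖ := mul_le_mul_of_nonneg_right (hM j u hu) (norm_nonneg _)
    have hev : ∀ᶠ y in 𝓝 x, ∀ j, hi j x ≠ h x → h x + M * ‖y - x‖ < hi j y := by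
      rw [eventually_all]
      intro j
      by_cases hj : hi j x = h x
      · exact Filter.Eventually.of_forall fun y h' => absurd hj h'
      · have gap : 0 < hi j x - h x := sub_pos.2 (lt_of_le_of_ne (hle j x) (Ne.symm hj))
        have hball : ∀ᶠ y in 𝓝 x, ‖y - x‖ < (hi j x - h x) / (2 * M + 1) := by
          filter_upwards [Metric.ball_mem_nhds x (show 0 < (hi j x - h x) / (2 * M + 1) by positivity)]
            with y hy
          rwa [Metric.mem_ball, dist_eq_norm] at hy
        filter_upwards [hball] with y hy _
        have l1 := lip j x y
        have hxy : ‖x - y‖ = ‖y - x‖ := norm_sub_rev _ _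
        rw [hxy] at l1
        have hprod : ‖y - x‖ * (2 * M + 1) < hi j x - h x := (lt_div_iff₀ (by positivity)).1 hy
        nlinarith [norm_nonneg (y - x), mul_nonneg hM0 (norm_nonneg (y - x))]
    filter_upwards [hev] with y hy
    obtain ⟨i₁, e₁⟩ := (hh y).1
    simp only at e₁
    have hact : hi i₁ x = h x := by
      by_contra hc
      have h1 := hy i₁ hc
      obtain ⟨i₀, e₀⟩ := (hh x).1
      simp only at e₀
      have h2 : h y ≤ hi i₀ y := hle i₀ y
      have h3 := lip i₀ y x
      rw [e₀] at h3
      linarith [e₁ ▸ h1]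
    obtain ⟨hvC, hvx⟩ := hv i₁ hact
    have h4 : ⟪v, y⟫ ≤ hi i₁ y := le_hi hhi hvC y
    have hsplit : ⟪v, y⟫ = ⟪v, x⟫ + ⟪v, y - x⟫ := by
      rw [← inner_add_right]
      congr 1
      abel
    have h5 : (0:ℝ) ≤ h y - h x - ⟪v, y - x⟫ := by
      rw [← e₁] at *
      rw [hact] at hvx
      nlinarith [hsplit]
    have h6 : -ε * ‖y - x‖ ≤ 0 := by
      have := norm_nonneg (y - x)
      nlinarith
    linarith

lemma A_smul (hhi : ∀ (i : ι) (x : En n), IsGreatest {r : ℝ | ∃ v ∈ C i, r = ⟪v, x⟫} (hi i x))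
    (hh : ∀ x : En n, IsLeast (Set.range fun i => hi i x) (h x))
    {c : ℝ} (hc : 0 < c) (x : En n) :
    (⋂ i ∈ {i : ι | hi i (c • x) = h (c • x)}, {v ∈ C i | ⟪v, c • x⟫ = hi i (c • x)})
      = ⋂ i ∈ {i : ι | hi i x = h x}, {v ∈ C i | ⟪v, x⟫ = hi i x} := by
  have hc0 : c ≠ 0 := hc.ne'
  ext v
  simp only [Set.mem_iInter, Set.mem_setOf_eq]
  refine forall_congr' fun i => ?_
  rw [hi_smul hhi i hc.le, h_smul hhi hh hc.le, real_inner_smul_right,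
    mul_right_inj' hc0, mul_right_inj' hc0]

end Aux

theorem aux_main {n : ℕ} {ι : Type*} [Fintype ι]
    (C : ι → Set (En n)) (hne : ∀ i, (C i).Nonempty)
    (hcomp : ∀ i, IsCompact (C i)) (hconv : ∀ i, Convex ℝ (C i))
    (hi : ι → En n → ℝ)
    (hhi : ∀ (i : ι) (x : En n), IsGreatest {r : ℝ | ∃ v ∈ C i, r = ⟪v, x⟫} (hi i x))
    (h : En n → ℝ)
    (hh : ∀ x : En n, IsLeast (Set.range fun i => hi i x) (h x)) :
    closure (⋃ x ∈ {x : En n | ‖x‖ = 1 ∧ 0 < h x},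
        ⋂ i ∈ {i : ι | hi i x = h x}, {v ∈ C i | ⟪v, x⟫ = hi i x})
    = {y : En n | ∃ xk yk : ℕ → En n, Tendsto xk atTop (𝓝 (0 : En n)) ∧
        (∀ k, 0 < h (xk k)) ∧ (∀ k, yk k ∈ FSubdiff h (xk k)) ∧
        Tendsto yk atTop (𝓝 y)} := by
  have h00 : h 0 = 0 := by
    obtain ⟨i, e⟩ := (hh 0).1
    simp only at e
    have : hi i 0 = 0 := by
      obtain ⟨w, hw, e'⟩ := (hhi i 0).1
      simp [e']
    rw [← e, this]
  apply Set.Subset.antisymm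
  · intro y hy
    obtain ⟨yk, hmem, hyk⟩ := mem_closure_iff_seq_limit.1 hy
    have hmem' : ∀ k : ℕ, ∃ u : En n, (‖u‖ = 1 ∧ 0 < h u) ∧
        yk k ∈ ⋂ i ∈ {i : ι | hi i u = h u}, {v ∈ C i | ⟪v, u⟫ = hi i u} := by
      intro k
      have := hmem k
      simp only [Set.mem_iUnion, Set.mem_setOf_eq] at this
      obtain ⟨u, hu, hm⟩ := this
      exact ⟨u, hu, hm⟩
    choose u hu hmu using hmem'
    set xk : ℕ → En n := fun k => ((k : ℝ) + 1)⁻¹ • u k with hxk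
    have hck : ∀ k : ℕ, (0:ℝ) < ((k : ℝ) + 1)⁻¹ := fun k => by positivity
    refine ⟨xk, yk, ?_, ?_, ?_, hyk⟩
    · apply squeeze_zero_norm (a := fun k : ℕ => 1 / ((k : ℝ) + 1))
        (fun k => ?_) tendsto_one_div_add_atTop_nhds_zero_nat
      rw [hxk]
      simp only [norm_smul, Real.norm_eq_abs, abs_of_pos (hck k), (hu k).1, mul_one, one_div]
      exact le_refl _
    · intro k
      have : h (xk k) = ((k : ℝ) + 1)⁻¹ * h (u k) := h_smul hhi hh (hck k).le (u k)
      rw [this]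
      exact mul_pos (hck k) (hu k).2
    · intro k
      rw [key hcomp hconv hhi hh (xk k), hxk]
      simp only
      rw [A_smul hhi hh (hck k) (u k)]
      exact hmu k
  · rintro y ⟨xk, yk, hxk, hpos, hsub, hyk⟩
    apply mem_closure_of_tendsto hyk
    apply Filter.Eventually.of_forall
    intro k
    have hx0 : xk k ≠ 0 := by
      intro e
      have := hpos k
      rw [e, h00] at this
      exact lt_irrefl 0 this
    have hnpos : (0:ℝ) < ‖xk k‖ := norm_pos_iff.2 hx0
    set c : ℝ := ‖xk k‖⁻¹ with hc
    have hcpos : 0 < c := by positivity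
    set uk := c • xk k with huk
    have hun : ‖uk‖ = 1 := norm_smul_inv_norm hx0
    have hupos : 0 < h uk := by
      rw [huk, h_smul hhi hh hcpos.le]
      exact mul_pos hcpos (hpos k)
    have hmem : yk k ∈ ⋂ i ∈ {i : ι | hi i uk = h uk}, {v ∈ C i | ⟪v, uk⟫ = hi i uk} := by
      rw [huk, A_smul hhi hh hcpos (xk k), ← key hcomp hconv hhi hh (xk k)]
      exact hsub k
    simp only [Set.mem_iUnion, Set.mem_setOf_eq]
    exact ⟨uk, ⟨hun, hupos⟩, hmem⟩



/-- for a finite pointwise minimum `h` of support functions of nonempty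
compact convex sets `C i`, the closure of `⋃_{x ∈ S, h x > 0} ⋂_{i ∈ I(x)}
Argmax_{v ∈ C i} ⟪v,x⟫` equals the outer limit of Fréchet subdifferentials of `h`
along `x → 0`, `h x > 0`. -/
theorem closure_union_eq_outerLim_sublinear {n : ℕ} {ι : Type*} [Fintype ι]
    (C : ι → Set (En n)) (hne : ∀ i, (C i).Nonempty)
    (hcomp : ∀ i, IsCompact (C i)) (hconv : ∀ i, Convex ℝ (C i))
    (hi : ι → En n → ℝ)
    (hhi : ∀ (i : ι) (x : En n), IsGreatest {r : ℝ | ∃ v ∈ C i, r = ⟪v, x⟫} (hi i x))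
    (h : En n → ℝ)
    (hh : ∀ x : En n, IsLeast (Set.range fun i => hi i x) (h x)) :
    closure (⋃ x ∈ {x : En n | ‖x‖ = 1 ∧ 0 < h x},
        ⋂ i ∈ {i : ι | hi i x = h x}, {v ∈ C i | ⟪v, x⟫ = hi i x})
    = {y : En n | ∃ xk yk : ℕ → En n, Tendsto xk atTop (𝓝 (0 : En n)) ∧
        (∀ k, 0 < h (xk k)) ∧ (∀ k, yk k ∈ FSubdiff h (xk k)) ∧
        Tendsto yk atTop (𝓝 y)} :=
  aux_main C hne hcomp hconv hi hhi h hh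
end
end

section
/- Let f₁(x,y) = √(x²+y²) + x/2 and f₂(x,y) = √(x²+y²) − x/2 on ℝ². Then the Fréchet subdifferential of f = min{f₁, f₂} at the origin satisfies: ∂f₁(0,0) is the closed unit disk centred at (1/2, 0), ∂f₂(0,0) is the closed unit disk centred at (−1/2, 0), and ∂f(0,0) = ∂f₁(0,0) ∩ ∂f₂(0,0). -/
open Filter Topology Set Metric
open scoped RealInnerProductSpace

noncomputable section

lemma fsub_mono {n : ℕ} {f g : En n → ℝ} {x : En n} (hle : ∀ y, f y ≤ g y)
    (heq : f x = g x) : FSubdiff f x ⊆ FSubdiff g x := by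
  intro v hv ε hε
  filter_upwards [hv ε hε] with y hy
  have := hle y
  simp only [ge_iff_le] at *
  linarith

lemma subdiff_norm_add {n : ℕ} (e : En n) :
    FSubdiff (fun v => ‖v‖ + ⟪e, v⟫) 0 = Metric.closedBall e 1 := by
  ext v
  simp only [FSubdiff, mem_setOf_eq, Metric.mem_closedBall, sub_zero, norm_zero,
    inner_zero_right, add_zero]
  constructor
  · intro h
    by_contra hlt
    push_neg at hlt
    rw [dist_eq_norm] at hlt
    set w := v - e with hw
    have hwpos : (0:ℝ) < ‖w‖ := lt_trans one_pos hlt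
    have hε : (0:ℝ) < (‖w‖ - 1) / 2 := by linarith
    have h2 := h _ hε
    have hcurve : Tendsto (fun t : ℝ => t • w) (𝓝[>] (0:ℝ)) (𝓝 0) := by
      have : Tendsto (fun t : ℝ => t • w) (𝓝 (0:ℝ)) (𝓝 ((0:ℝ) • w)) :=
        (continuous_id.smul continuous_const).tendsto 0
      simpa using this.mono_left nhdsWithin_le_nhds
    have h3 := (hcurve.eventually h2).and self_mem_nhdsWithin
    obtain ⟨t, hineq, ht⟩ := h3.exists
    replace ht : (0:ℝ) < t := ht
    have hnorm : ‖t • w‖ = t * ‖w‖ := by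
      rw [norm_smul, Real.norm_eq_abs, abs_of_pos ht]
    have hie : ⟪e, t • w⟫ = t * ⟪e, w⟫ := real_inner_smul_right e w t
    have hiv : ⟪v, t • w⟫ = t * ⟪v, w⟫ := real_inner_smul_right v w t
    have hvw : ⟪v, w⟫ - ⟪e, w⟫ = ‖w‖ ^ 2 := by
      rw [← inner_sub_left, ← hw, real_inner_self_eq_norm_sq]
    simp only [ge_iff_le, hnorm, hie, hiv] at hineq
    nlinarith [mul_pos ht hwpos]
  · intro h ε hε
    rw [dist_eq_norm] at h
    filter_upwards with y
    have hcs : ⟪v - e, y⟫ ≤ ‖v - e‖ * ‖y‖ := real_inner_le_norm _ _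
    have hsub : ⟪v - e, y⟫ = ⟪v, y⟫ - ⟪e, y⟫ := inner_sub_left _ _ _
    nlinarith [norm_nonneg y, mul_nonneg hε.le (norm_nonneg y), hε.le]

lemma inner_single_half (c : ℝ) (y : En 2) :
    ⟪EuclideanSpace.single (0 : Fin 2) c, y⟫ = c * y 0 := by
  simp [EuclideanSpace.inner_single_left]

/-- for `f₁(x,y) = ‖(x,y)‖ + x/2`, `f₂(x,y) = ‖(x,y)‖ - x/2` on `ℝ²`,
the Fréchet subdifferentials at the origin are the closed unit disks centred at
`(1/2, 0)` and `(-1/2, 0)` respectively, and the subdifferential of `min{f₁,f₂}`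
at the origin is their intersection. -/
theorem disks_example :
    FSubdiff (fun v : En 2 => ‖v‖ + v 0 / 2) 0
      = Metric.closedBall (EuclideanSpace.single (0 : Fin 2) ((1 : ℝ) / 2)) 1 ∧
    FSubdiff (fun v : En 2 => ‖v‖ - v 0 / 2) 0
      = Metric.closedBall (EuclideanSpace.single (0 : Fin 2) (-(1 : ℝ) / 2)) 1 ∧
    FSubdiff (fun v : En 2 => min (‖v‖ + v 0 / 2) (‖v‖ - v 0 / 2)) 0
      = Metric.closedBall (EuclideanSpace.single (0 : Fin 2) ((1 : ℝ) / 2)) 1 ∩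
        Metric.closedBall (EuclideanSpace.single (0 : Fin 2) (-(1 : ℝ) / 2)) 1 := by
  set ep : En 2 := EuclideanSpace.single (0 : Fin 2) ((1 : ℝ) / 2) with hep
  set em : En 2 := EuclideanSpace.single (0 : Fin 2) (-(1 : ℝ) / 2) with hem
  have hf1 : (fun v : En 2 => ‖v‖ + v 0 / 2) = fun v => ‖v‖ + ⟪ep, v⟫ := by
    funext v; rw [hep, inner_single_half]; ring
  have hf2 : (fun v : En 2 => ‖v‖ - v 0 / 2) = fun v => ‖v‖ + ⟪em, v⟫ := by
    funext v; rw [hem, inner_single_half]; ring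
  have h1 : FSubdiff (fun v : En 2 => ‖v‖ + v 0 / 2) 0 = Metric.closedBall ep 1 := by
    rw [hf1, subdiff_norm_add]
  have h2 : FSubdiff (fun v : En 2 => ‖v‖ - v 0 / 2) 0 = Metric.closedBall em 1 := by
    rw [hf2, subdiff_norm_add]
  refine ⟨h1, h2, ?_⟩
  apply Set.Subset.antisymm
  · intro v hv
    constructor
    · rw [← h1]
      exact fsub_mono (fun y => min_le_left _ _) (by simp) hv
    · rw [← h2]
      exact fsub_mono (fun y => min_le_right _ _) (by simp) hv
  · rintro v ⟨hp, hm⟩ ε hε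
    rw [Metric.mem_closedBall, dist_eq_norm] at hp hm
    filter_upwards with y
    simp only [sub_zero, norm_zero, inner_zero_right, ge_iff_le,
      show ((0 : En 2)) 0 = (0:ℝ) from rfl, zero_div, add_zero, zero_sub, neg_zero, min_self]
    have hεy : -ε * ‖y‖ ≤ 0 := by
      have := norm_nonneg y; nlinarith
    rcases le_total 0 (y 0) with hy | hy
    · have hmin : min (‖y‖ + y 0 / 2) (‖y‖ - y 0 / 2) = ‖y‖ - y 0 / 2 :=
        min_eq_right (by linarith)
      have hcs : ⟪v - em, y⟫ ≤ ‖v - em‖ * ‖y‖ := real_inner_le_norm _ _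
      have hsub : ⟪v - em, y⟫ = ⟪v, y⟫ + y 0 / 2 := by
        rw [inner_sub_left, hem, inner_single_half]; ring
      rw [hmin]
      nlinarith [norm_nonneg y]
    · have hmin : min (‖y‖ + y 0 / 2) (‖y‖ - y 0 / 2) = ‖y‖ + y 0 / 2 :=
        min_eq_left (by linarith)
      have hcs : ⟪v - ep, y⟫ ≤ ‖v - ep‖ * ‖y‖ := real_inner_le_norm _ _
      have hsub : ⟪v - ep, y⟫ = ⟪v, y⟫ - y 0 / 2 := by
        rw [inner_sub_left, hep, inner_single_half]; ring
      rw [hmin]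
      nlinarith [norm_nonneg y]
end
end
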